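/- arXiv:math/0612461 — 9 statements merged into one kernel-verified Lean document; each statement's English description precedes it below -/
import Mathlib

section
/- If G is a graph of order n with no clique of size r+1, then the spectral radius μ(G) of its adjacency matrix satisfies μ(G) ≤ μ(T_r(n)), with equality if and only if G is the r-partite Turán graph T_r(n). -/
/-- The spectral radius (largest adjacency eigenvalue) of a graph. -/
noncomputable def graphMu {n : ℕ} (G : SimpleGraph (Fin n)) [DecidableRel G.Adj] : ℝ :=
  sSup {x : ℝ | Module.End.HasEigenvalue (Matrix.toLin' (G.adjMatrix ℝ)) x}

open Matrix Finset SimpleGraph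

variable {n : ℕ}

noncomputable def muM (A : Matrix (Fin n) (Fin n) ℝ) : ℝ :=
  sSup {x : ℝ | Module.End.HasEigenvalue (Matrix.toLin' A) x}

lemma hasEigen_iff {A : Matrix (Fin n) (Fin n) ℝ} {t : ℝ} :
    Module.End.HasEigenvalue (Matrix.toLin' A) t ↔ ∃ x : Fin n → ℝ, x ≠ 0 ∧ A *ᵥ x = t • x := by
  rw [Module.End.hasEigenvalue_iff, Submodule.ne_bot_iff]
  constructor
  · rintro ⟨x, hx, hx0⟩
    exact ⟨x, hx0, by simpa [Matrix.toLin'_apply] using Module.End.mem_eigenspace_iff.1 hx⟩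
  · rintro ⟨x, hx0, hx⟩
    exact ⟨x, Module.End.mem_eigenspace_iff.2 (by simpa [Matrix.toLin'_apply] using hx), hx0⟩

lemma sum_dot (f : Fin n → (Fin n → ℝ)) (y : Fin n → ℝ) :
    (∑ i, f i) ⬝ᵥ y = ∑ i, (f i ⬝ᵥ y) := by
  simp only [dotProduct, Finset.sum_apply, Finset.sum_mul]
  exact Finset.sum_comm

lemma dot_sum' (f : Fin n → (Fin n → ℝ)) (y : Fin n → ℝ) :
    y ⬝ᵥ (∑ i, f i) = ∑ i, (y ⬝ᵥ f i) := by
  simp only [dotProduct, Finset.sum_apply, Finset.mul_sum]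
  exact Finset.sum_comm

lemma mulVec_sum' (A : Matrix (Fin n) (Fin n) ℝ) (f : Fin n → (Fin n → ℝ)) :
    A *ᵥ (∑ i, f i) = ∑ i, A *ᵥ f i := by
  have := map_sum A.mulVecLin f Finset.univ
  simpa only [Matrix.mulVecLin_apply] using this

lemma dotProduct_self_pos' {x : Fin n → ℝ} (hx : x ≠ 0) : 0 < x ⬝ᵥ x := by
  rcases (Fintype.sum_nonneg fun i => mul_self_nonneg (x i) :
      (0:ℝ) ≤ x ⬝ᵥ x).lt_or_eq with h | h
  · exact h
  · exact absurd ((dotProduct_self_eq_zero).1 h.symm) hx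

section herm

variable {A : Matrix (Fin n) (Fin n) ℝ} (hA : A.IsHermitian)

noncomputable def coeffs (hA : A.IsHermitian) (x : Fin n → ℝ) (i : Fin n) : ℝ :=
  (WithLp.equiv 2 _) (hA.eigenvectorBasis i) ⬝ᵥ x

lemma basis_dot (i j : Fin n) :
    (WithLp.equiv 2 _) (hA.eigenvectorBasis i) ⬝ᵥ (WithLp.equiv 2 _) (hA.eigenvectorBasis j)
      = if i = j then 1 else 0 := by
  have h := (orthonormal_iff_ite (𝕜 := ℝ)).1 hA.eigenvectorBasis.orthonormal i j
  rw [PiLp.inner_apply] at h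
  simpa [dotProduct, RCLike.inner_apply, mul_comm] using h

lemma sum_coeffs (x : Fin n → ℝ) :
    x = ∑ i, coeffs hA x i • (WithLp.equiv 2 _) (hA.eigenvectorBasis i) := by
  have h := congrArg (WithLp.linearEquiv 2 ℝ (Fin n → ℝ))
    (hA.eigenvectorBasis.sum_repr ((WithLp.linearEquiv 2 ℝ (Fin n → ℝ)).symm x))
  rw [map_sum, LinearEquiv.apply_symm_apply] at h
  refine h.symm.trans (Finset.sum_congr rfl fun i _ => ?_)
  rw [_root_.map_smul]
  congr 1
  rw [OrthonormalBasis.repr_apply_apply, PiLp.inner_apply]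
  simp [coeffs, dotProduct, RCLike.inner_apply, mul_comm]

lemma dot_basis_sum (x : Fin n → ℝ) (e : Fin n → ℝ) :
    x ⬝ᵥ (∑ j, e j • (WithLp.equiv 2 _) (hA.eigenvectorBasis j)) = ∑ j, coeffs hA x j * e j := by
  rw [dot_sum']
  refine Finset.sum_congr rfl fun j _ => ?_
  rw [dotProduct_smul, dotProduct_comm]
  simp [coeffs, smul_eq_mul, mul_comm]

lemma mulVec_expand (x : Fin n → ℝ) :
    A *ᵥ x = ∑ i, (hA.eigenvalues i * coeffs hA x i) • (WithLp.equiv 2 _) (hA.eigenvectorBasis i) := by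
  refine (congrArg (A *ᵥ ·) (sum_coeffs hA x)).trans ?_
  rw [mulVec_sum']
  refine Finset.sum_congr rfl fun i _ => ?_
  rw [Matrix.mulVec_smul]; erw [hA.mulVec_eigenvectorBasis]; rw [smul_smul, mul_comm]; rfl

lemma dot_self_coeffs (x : Fin n → ℝ) : x ⬝ᵥ x = ∑ i, coeffs hA x i ^ 2 := by
  refine (congrArg (x ⬝ᵥ ·) (sum_coeffs hA x)).trans ?_
  rw [dot_basis_sum hA]
  exact Finset.sum_congr rfl fun i _ => (sq _).symm

lemma rayleigh_coeffs (x : Fin n → ℝ) :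
    x ⬝ᵥ (A *ᵥ x) = ∑ i, hA.eigenvalues i * coeffs hA x i ^ 2 := by
  refine (congrArg (x ⬝ᵥ ·) (mulVec_expand hA x)).trans ?_
  rw [dot_basis_sum hA]
  exact Finset.sum_congr rfl fun i _ => by ring

theorem muM_spec (hn : 0 < n) (hA : A.IsHermitian) :
    (∃ x : Fin n → ℝ, x ≠ 0 ∧ A *ᵥ x = muM A • x) ∧
    (∀ x : Fin n → ℝ, x ⬝ᵥ (A *ᵥ x) ≤ muM A * (x ⬝ᵥ x)) ∧
    (∀ x : Fin n → ℝ, x ≠ 0 → x ⬝ᵥ (A *ᵥ x) = muM A * (x ⬝ᵥ x) → A *ᵥ x = muM A • x) := by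
  haveI : Nonempty (Fin n) := Fin.pos_iff_nonempty.1 hn
  obtain ⟨i0, hi0⟩ := Finite.exists_max hA.eigenvalues
  set m := hA.eigenvalues i0 with hm
  have hbne : ∀ i, (WithLp.equiv 2 _) (hA.eigenvectorBasis i) ≠ (0 : Fin n → ℝ) := by
    intro i h0
    have := basis_dot hA i i
    rw [h0] at this
    simp at this
  have hmem : Module.End.HasEigenvalue (Matrix.toLin' A) m :=
    hasEigen_iff.2 ⟨_, hbne i0, hA.mulVec_eigenvectorBasis i0⟩
  have hub : ∀ t ∈ {x : ℝ | Module.End.HasEigenvalue (Matrix.toLin' A) x}, t ≤ m := by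
    rintro t ht
    obtain ⟨x, hx0, hx⟩ := hasEigen_iff.1 ht
    have h1 : x ⬝ᵥ (A *ᵥ x) = t * (x ⬝ᵥ x) := by
      rw [hx, dotProduct_smul]; rfl
    have h2 : x ⬝ᵥ (A *ᵥ x) ≤ m * (x ⬝ᵥ x) := by
      rw [rayleigh_coeffs hA, dot_self_coeffs hA, Finset.mul_sum]
      exact Finset.sum_le_sum fun i _ => mul_le_mul_of_nonneg_right (hi0 i) (sq_nonneg _)
    have h3 := dotProduct_self_pos' hx0
    nlinarith [h1 ▸ h2]
  have hsup : muM A = m :=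
    le_antisymm (csSup_le ⟨m, hmem⟩ hub) (le_csSup ⟨m, hub⟩ hmem)
  rw [hsup]
  refine ⟨⟨_, hbne i0, hA.mulVec_eigenvectorBasis i0⟩, ?_, ?_⟩
  · intro x
    rw [rayleigh_coeffs hA, dot_self_coeffs hA, Finset.mul_sum]
    exact Finset.sum_le_sum fun i _ => mul_le_mul_of_nonneg_right (hi0 i) (sq_nonneg _)
  · intro x hx0 hx
    rw [rayleigh_coeffs hA, dot_self_coeffs hA, Finset.mul_sum] at hx
    have hz : ∀ i ∈ Finset.univ, (m - hA.eigenvalues i) * coeffs hA x i ^ 2 = 0 := by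
      refine (Finset.sum_eq_zero_iff_of_nonneg fun i _ =>
        mul_nonneg (by linarith [hi0 i]) (sq_nonneg _)).1 ?_
      have h4 : ∑ i, (m - hA.eigenvalues i) * coeffs hA x i ^ 2
          = ∑ i, m * coeffs hA x i ^ 2 - ∑ i, hA.eigenvalues i * coeffs hA x i ^ 2 := by
        rw [← Finset.sum_sub_distrib]
        exact Finset.sum_congr rfl fun i _ => by ring
      rw [h4, ← hx]
      ring
    rw [mulVec_expand hA x]
    conv_rhs => rw [sum_coeffs hA x, Finset.smul_sum]
    refine Finset.sum_congr rfl fun i _ => ?_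
    rw [smul_smul]
    rcases mul_eq_zero.1 (hz i (Finset.mem_univ i)) with h | h
    · rw [show hA.eigenvalues i = m by linarith]
    · rw [pow_eq_zero_iff (two_ne_zero)] at h
      simp [h]

end herm


section graph
variable (G : SimpleGraph (Fin n)) [DecidableRel G.Adj]

lemma adjMatrix_herm : (G.adjMatrix ℝ).IsHermitian := by
  ext i j
  simp only [Matrix.conjTranspose_apply, star_trivial, SimpleGraph.adjMatrix_apply,
    SimpleGraph.adj_comm]

lemma adjMatrix_nonneg (i j : Fin n) : 0 ≤ G.adjMatrix ℝ i j := by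
  rw [SimpleGraph.adjMatrix_apply]; split_ifs <;> norm_num

lemma adjMatrix_le_one (i j : Fin n) : G.adjMatrix ℝ i j ≤ 1 := by
  rw [SimpleGraph.adjMatrix_apply]; split_ifs <;> norm_num

lemma rayleigh_double (B : Matrix (Fin n) (Fin n) ℝ) (x : Fin n → ℝ) :
    x ⬝ᵥ (B *ᵥ x) = ∑ v, ∑ j, B v j * (x v * x j) := by
  simp only [dotProduct, Matrix.mulVec, Finset.mul_sum]
  exact Finset.sum_congr rfl fun v _ => Finset.sum_congr rfl fun j _ => by ring

lemma sum_erase_mulVec (A : Matrix (Fin n) (Fin n) ℝ) (x : Fin n → ℝ) (v t : Fin n) :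
    ∑ j ∈ Finset.univ.erase t, A v j * x j = (A *ᵥ x) v - A v t * x t := by
  have : (A *ᵥ x) v = ∑ j, A v j * x j := rfl
  rw [this, ← Finset.sum_erase_add _ _ (Finset.mem_univ t)]
  ring

lemma adjMatrix_irrel (H : SimpleGraph (Fin n)) (i1 i2 : DecidableRel H.Adj) :
    @SimpleGraph.adjMatrix ℝ (Fin n) H i1 _ _ = @SimpleGraph.adjMatrix ℝ (Fin n) H i2 _ _ := by
  have h : i1 = i2 := funext fun a => funext fun b => Subsingleton.elim _ _
  rw [h]

variable {G}

lemma replace_adjMatrix_of_ne {s t v w : Fin n} (hv : v ≠ t) (hw : w ≠ t) :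
    (G.replaceVertex s t).adjMatrix ℝ v w = G.adjMatrix ℝ v w := by
  classical
  simp [SimpleGraph.adjMatrix_apply, G.adj_replaceVertex_iff_of_ne s hv hw]

lemma replace_adjMatrix_right {s t v : Fin n} (hv : v ≠ t) :
    (G.replaceVertex s t).adjMatrix ℝ v t = G.adjMatrix ℝ v s := by
  classical
  have h : (G.replaceVertex s t).Adj v t ↔ G.Adj v s := by
    rw [SimpleGraph.adj_comm, G.adj_replaceVertex_iff_of_ne_right s hv, SimpleGraph.adj_comm]
  simp [SimpleGraph.adjMatrix_apply, h]

lemma replace_adjMatrix_left {s t w : Fin n} (hw : w ≠ t) :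
    (G.replaceVertex s t).adjMatrix ℝ t w = G.adjMatrix ℝ s w := by
  classical
  simp [SimpleGraph.adjMatrix_apply, G.adj_replaceVertex_iff_of_ne_right s hw]

lemma replace_adjMatrix_tt (s t : Fin n) :
    (G.replaceVertex s t).adjMatrix ℝ t t = 0 := by simp

/-- (L4) -/
lemma replace_mulVec {s t v : Fin n} (hv : v ≠ t) (x : Fin n → ℝ) :
    ((G.replaceVertex s t).adjMatrix ℝ *ᵥ x) v
      = (G.adjMatrix ℝ *ᵥ x) v + (G.adjMatrix ℝ v s - G.adjMatrix ℝ v t) * x t := by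
  classical
  have h1 : ((G.replaceVertex s t).adjMatrix ℝ *ᵥ x) v
      = ∑ j ∈ Finset.univ.erase t, (G.replaceVertex s t).adjMatrix ℝ v j * x j
        + (G.replaceVertex s t).adjMatrix ℝ v t * x t := by
    rw [show ((G.replaceVertex s t).adjMatrix ℝ *ᵥ x) _ = ∑ j, (G.replaceVertex s t).adjMatrix ℝ _ j * x j from rfl,
      ← Finset.sum_erase_add _ _ (Finset.mem_univ t)]
  rw [h1, replace_adjMatrix_right hv,
    Finset.sum_congr rfl (fun j hj => by
      rw [replace_adjMatrix_of_ne hv (Finset.ne_of_mem_erase hj)]),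
    sum_erase_mulVec]
  ring

/-- (L4t) -/
lemma replace_mulVec_t (s t : Fin n) (x : Fin n → ℝ) :
    ((G.replaceVertex s t).adjMatrix ℝ *ᵥ x) t
      = (G.adjMatrix ℝ *ᵥ x) s - G.adjMatrix ℝ s t * x t := by
  classical
  have h1 : ((G.replaceVertex s t).adjMatrix ℝ *ᵥ x) t
      = ∑ j ∈ Finset.univ.erase t, (G.replaceVertex s t).adjMatrix ℝ t j * x j
        + (G.replaceVertex s t).adjMatrix ℝ t t * x t := by
    rw [show ((G.replaceVertex s t).adjMatrix ℝ *ᵥ x) _ = ∑ j, (G.replaceVertex s t).adjMatrix ℝ _ j * x j from rfl,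
      ← Finset.sum_erase_add _ _ (Finset.mem_univ t)]
  rw [h1, replace_adjMatrix_tt,
    Finset.sum_congr rfl (fun j hj => by
      rw [replace_adjMatrix_left (Finset.ne_of_mem_erase hj)]),
    sum_erase_mulVec]
  ring

/-- (L1) Rayleigh difference under replaceVertex. -/
lemma replace_rayleigh (s t : Fin n) (x : Fin n → ℝ) :
    x ⬝ᵥ ((G.replaceVertex s t).adjMatrix ℝ *ᵥ x)
      = x ⬝ᵥ (G.adjMatrix ℝ *ᵥ x)
        + 2 * x t * ((G.adjMatrix ℝ *ᵥ x) s - (G.adjMatrix ℝ *ᵥ x) t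
            - G.adjMatrix ℝ s t * x t) := by
  classical
  set A := G.adjMatrix ℝ with hA
  have hsymm : ∀ i j, A i j = A j i := fun i j => by
    simp [hA, SimpleGraph.adjMatrix_apply, SimpleGraph.adj_comm]
  have hRight : x ⬝ᵥ ((G.replaceVertex s t).adjMatrix ℝ *ᵥ x)
      = ∑ v ∈ Finset.univ.erase t, x v * ((G.replaceVertex s t).adjMatrix ℝ *ᵥ x) v
        + x t * ((G.replaceVertex s t).adjMatrix ℝ *ᵥ x) t := by
    rw [show x ⬝ᵥ ((G.replaceVertex s t).adjMatrix ℝ *ᵥ x)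
        = ∑ v, x v * ((G.replaceVertex s t).adjMatrix ℝ *ᵥ x) v from rfl,
      ← Finset.sum_erase_add _ _ (Finset.mem_univ t)]
  have hLeft : x ⬝ᵥ (A *ᵥ x)
      = ∑ v ∈ Finset.univ.erase t, x v * (A *ᵥ x) v + x t * (A *ᵥ x) t := by
    rw [show x ⬝ᵥ (A *ᵥ x) = ∑ v, x v * (A *ᵥ x) v from rfl,
      ← Finset.sum_erase_add _ _ (Finset.mem_univ t)]
  rw [hRight, hLeft, replace_mulVec_t,
    Finset.sum_congr rfl (fun v hv => by
      rw [replace_mulVec (Finset.ne_of_mem_erase hv) x])]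
  have hexp : ∑ v ∈ Finset.univ.erase t,
        x v * ((A *ᵥ x) v + (A v s - A v t) * x t)
      = ∑ v ∈ Finset.univ.erase t, x v * (A *ᵥ x) v
        + (∑ v ∈ Finset.univ.erase t, A v s * x v) * x t
        - (∑ v ∈ Finset.univ.erase t, A v t * x v) * x t := by
    rw [Finset.sum_mul, Finset.sum_mul, ← Finset.sum_add_distrib, ← Finset.sum_sub_distrib]
    exact Finset.sum_congr rfl fun v _ => by ring
  have e1 : ∑ v ∈ Finset.univ.erase t, A v s * x v = (A *ᵥ x) s - A s t * x t := by
    rw [Finset.sum_congr rfl (fun v _ => by rw [hsymm v s]), sum_erase_mulVec]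
  have e2 : ∑ v ∈ Finset.univ.erase t, A v t * x v = (A *ᵥ x) t := by
    rw [Finset.sum_congr rfl (fun v _ => by rw [hsymm v t]), sum_erase_mulVec]
    have : A t t = 0 := by simp [hA]
    rw [this]; ring
  rw [hexp, e1, e2]
  ring

/-- (L2) Rayleigh difference under adding an edge. -/
lemma sup_edge_rayleigh {s t : Fin n} (hst : s ≠ t) (hna : ¬G.Adj s t) (x : Fin n → ℝ) :
    x ⬝ᵥ ((G ⊔ edge s t).adjMatrix ℝ *ᵥ x)
      = x ⬝ᵥ (G.adjMatrix ℝ *ᵥ x) + 2 * (x s * x t) := by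
  have hent : ∀ v j, (G ⊔ edge s t).adjMatrix ℝ v j
      = G.adjMatrix ℝ v j + ((if v = s ∧ j = t then 1 else 0) + (if v = t ∧ j = s then 1 else 0)) := by
    intro v j
    simp only [SimpleGraph.adjMatrix_apply, SimpleGraph.sup_adj, SimpleGraph.edge_adj]
    by_cases h1 : v = s ∧ j = t
    · obtain ⟨rfl, rfl⟩ := h1
      simp [hst, hna, hst.symm]
    · by_cases h2 : v = t ∧ j = s
      · obtain ⟨rfl, rfl⟩ := h2
        have : ¬G.Adj v j := fun h => hna h.symm
        simp [hst, hst.symm, this, h1]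
      · simp only [h1, h2, if_false, add_zero]
        have : ¬((v = s ∧ j = t ∨ v = t ∧ j = s) ∧ v ≠ j) := by tauto
        by_cases hadj : G.Adj v j <;> simp [hadj, this]
  rw [rayleigh_double, rayleigh_double]
  have : ∀ v, ∑ j, (G ⊔ edge s t).adjMatrix ℝ v j * (x v * x j)
      = ∑ j, (G.adjMatrix ℝ v j * (x v * x j)
          + ((if v = s ∧ j = t then 1 else 0) * (x v * x j)
            + (if v = t ∧ j = s then 1 else 0) * (x v * x j))) := by
    intro v
    refine Finset.sum_congr rfl fun j _ => ?_
    rw [hent v j]; ring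
  refine (Finset.sum_congr rfl fun v _ => this v).trans ?_
  simp only [Finset.sum_add_distrib]
  have hs1 : ∑ v, ∑ j, (if v = s ∧ j = t then (1:ℝ) else 0) * (x v * x j) = x s * x t := by
    have : ∀ v, ∑ j, (if v = s ∧ j = t then (1:ℝ) else 0) * (x v * x j)
        = if v = s then x v * x t else 0 := by
      intro v
      by_cases hv : v = s
      · subst hv
        simp only [true_and, if_true]
        rw [Finset.sum_eq_single t]
        · simp
        · intro j _ hj; simp [hj]
        · simp
      · simp [hv]
    rw [Finset.sum_congr rfl fun v _ => this v, Finset.sum_ite_eq' Finset.univ s]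
    simp
  have hs2 : ∑ v, ∑ j, (if v = t ∧ j = s then (1:ℝ) else 0) * (x v * x j) = x t * x s := by
    have : ∀ v, ∑ j, (if v = t ∧ j = s then (1:ℝ) else 0) * (x v * x j)
        = if v = t then x v * x s else 0 := by
      intro v
      by_cases hv : v = t
      · subst hv
        simp only [true_and, if_true]
        rw [Finset.sum_eq_single s]
        · simp
        · intro j _ hj; simp [hj]
        · simp
      · simp [hv]
    rw [Finset.sum_congr rfl fun v _ => this v, Finset.sum_ite_eq' Finset.univ t]
    simp
  rw [hs1, hs2]
  ring

end graph

section mugraph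

variable {r : ℕ}

lemma graphMu_eq_muM (G : SimpleGraph (Fin n)) [DecidableRel G.Adj] :
    graphMu G = muM (G.adjMatrix ℝ) := rfl

lemma graphMu_irrel (G : SimpleGraph (Fin n)) (i1 i2 : DecidableRel G.Adj) :
    @graphMu n G i1 = @graphMu n G i2 := by
  rw [@graphMu_eq_muM n G i1, @graphMu_eq_muM n G i2, adjMatrix_irrel G i1 i2]

lemma graphMu_congr {G H : SimpleGraph (Fin n)} (iG : DecidableRel G.Adj)
    (iH : DecidableRel H.Adj) (h : G = H) : @graphMu n G iG = @graphMu n H iH := by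
  subst h; exact graphMu_irrel G iG iH

/-- Rayleigh upper bound -/
lemma graphMu_ray (G : SimpleGraph (Fin n)) [DecidableRel G.Adj] (hn : 0 < n) (x : Fin n → ℝ) :
    x ⬝ᵥ (G.adjMatrix ℝ *ᵥ x) ≤ graphMu G * (x ⬝ᵥ x) :=
  (muM_spec hn (adjMatrix_herm G)).2.1 x

lemma graphMu_eigvec (G : SimpleGraph (Fin n)) [DecidableRel G.Adj] (hn : 0 < n) :
    ∃ x : Fin n → ℝ, x ≠ 0 ∧ G.adjMatrix ℝ *ᵥ x = graphMu G • x :=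
  (muM_spec hn (adjMatrix_herm G)).1

lemma graphMu_eig_of_ray (G : SimpleGraph (Fin n)) [DecidableRel G.Adj] (hn : 0 < n)
    {x : Fin n → ℝ} (hx : x ≠ 0) (h : x ⬝ᵥ (G.adjMatrix ℝ *ᵥ x) = graphMu G * (x ⬝ᵥ x)) :
    G.adjMatrix ℝ *ᵥ x = graphMu G • x :=
  (muM_spec hn (adjMatrix_herm G)).2.2 x hx h

lemma mulVec_nonneg (G : SimpleGraph (Fin n)) [DecidableRel G.Adj] {x : Fin n → ℝ}
    (hx : ∀ i, 0 ≤ x i) (v : Fin n) : 0 ≤ (G.adjMatrix ℝ *ᵥ x) v :=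
  Fintype.sum_nonneg fun j => mul_nonneg (adjMatrix_nonneg G v j) (hx j)

lemma graphMu_pos_of_adj {G : SimpleGraph (Fin n)} [DecidableRel G.Adj] {u v : Fin n}
    (h : G.Adj u v) : 0 < graphMu G := by
  have hn : 0 < n := u.pos
  classical
  set x : Fin n → ℝ := fun i => if i = u ∨ i = v then 1 else 0 with hxdef
  have hx0 : ∀ i, 0 ≤ x i := fun i => by rw [hxdef]; dsimp only; split_ifs <;> norm_num
  have hxu : x u = 1 := by simp [hxdef]
  have hxv : x v = 1 := by simp [hxdef]
  have hxne : x ≠ 0 := fun h0 => by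
    have := congrFun h0 u; rw [hxu] at this; norm_num at this
  have hAx : (1:ℝ) ≤ (G.adjMatrix ℝ *ᵥ x) u := by
    have h1 : (G.adjMatrix ℝ *ᵥ x) u = ∑ j, G.adjMatrix ℝ u j * x j := rfl
    rw [h1]
    have : G.adjMatrix ℝ u v * x v = 1 := by simp [hxv, h]
    calc (1:ℝ) = G.adjMatrix ℝ u v * x v := this.symm
      _ ≤ ∑ j, G.adjMatrix ℝ u j * x j :=
        Finset.single_le_sum (fun j _ => mul_nonneg (adjMatrix_nonneg G u j) (hx0 j))
          (Finset.mem_univ v)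
  have hray : (1:ℝ) ≤ x ⬝ᵥ (G.adjMatrix ℝ *ᵥ x) := by
    have h1 : x ⬝ᵥ (G.adjMatrix ℝ *ᵥ x) = ∑ w, x w * (G.adjMatrix ℝ *ᵥ x) w := rfl
    rw [h1]
    calc (1:ℝ) = x u * 1 := by rw [hxu]; ring
      _ ≤ x u * (G.adjMatrix ℝ *ᵥ x) u := by
          rw [hxu]; simpa using hAx
      _ ≤ ∑ w, x w * (G.adjMatrix ℝ *ᵥ x) w :=
        Finset.single_le_sum (fun w _ => mul_nonneg (hx0 w) (mulVec_nonneg G hx0 w))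
          (Finset.mem_univ u)
  have hd := dotProduct_self_pos' hxne
  have := le_trans hray (graphMu_ray G hn x)
  nlinarith

/-- graphMu is invariant under graph isomorphism (on the same `Fin n`). -/
lemma eigen_set_subset {G H : SimpleGraph (Fin n)} [DecidableRel G.Adj] [DecidableRel H.Adj]
    (e : G ≃g H) (t : ℝ) (ht : Module.End.HasEigenvalue (Matrix.toLin' (G.adjMatrix ℝ)) t) :
    Module.End.HasEigenvalue (Matrix.toLin' (H.adjMatrix ℝ)) t := by
  obtain ⟨x, hx0, hx⟩ := hasEigen_iff.1 ht
  refine hasEigen_iff.2 ⟨fun i => x (e.symm i), ?_, ?_⟩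
  · intro h0
    apply hx0
    funext j
    have := congrFun h0 (e j)
    simpa using this
  · funext i
    have h1 : (H.adjMatrix ℝ *ᵥ fun i => x (e.symm i)) i
        = ∑ j, H.adjMatrix ℝ i (e j) * x (e.symm (e j)) := by
      rw [show (H.adjMatrix ℝ *ᵥ fun i => x (e.symm i)) i
          = ∑ j, H.adjMatrix ℝ i j * x (e.symm j) from rfl]
      exact (Equiv.sum_comp e.toEquiv (fun j => H.adjMatrix ℝ i j * x (e.symm j))).symm
    have h2 : ∀ j : Fin n, H.adjMatrix ℝ i (e j) = G.adjMatrix ℝ (e.symm i) j := by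
      intro j
      have hadj : H.Adj i (e j) ↔ G.Adj (e.symm i) j := by
        conv_lhs => rw [← e.toEquiv.apply_symm_apply i]
        exact e.map_adj_iff
      simp only [SimpleGraph.adjMatrix_apply]
      rw [if_congr hadj rfl rfl]
    have h4 : ∀ j : Fin n, x (e.symm (e j)) = x j := fun j => congrArg x (by simp)
    rw [h1, Finset.sum_congr rfl (fun j _ => by rw [h2 j, h4 j])]
    have h3 : ∑ j, G.adjMatrix ℝ (e.symm i) j * x j = (G.adjMatrix ℝ *ᵥ x) (e.symm i) := rfl
    rw [h3, hx]
    rfl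

lemma graphMu_iso {G H : SimpleGraph (Fin n)} [DecidableRel G.Adj] [DecidableRel H.Adj]
    (e : G ≃g H) : graphMu G = graphMu H := by
  rw [graphMu, graphMu]
  congr 1
  ext t
  exact ⟨eigen_set_subset e t, eigen_set_subset e.symm t⟩

lemma exists_mu_max (hr : 0 < r) (n : ℕ) :
    ∃ (H : SimpleGraph (Fin n)) (iH : DecidableRel H.Adj), H.CliqueFree (r+1) ∧
      ∀ (K : SimpleGraph (Fin n)) (iK : DecidableRel K.Adj), K.CliqueFree (r+1) →
        @graphMu n K iK ≤ @graphMu n H iH := by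
  classical
  let c := {H : SimpleGraph (Fin n) | H.CliqueFree (r+1)}
  have cn : c.toFinset.Nonempty := ⟨⊥, by
    simp only [Set.toFinset_setOf, Finset.mem_filter, Finset.mem_univ, true_and, c]
    exact SimpleGraph.cliqueFree_bot (by omega)⟩
  obtain ⟨S, Sm, Sl⟩ := Finset.exists_max_image c.toFinset
    (fun H => @graphMu n H (Classical.decRel _)) cn
  rw [Set.mem_toFinset] at Sm
  refine ⟨S, Classical.decRel _, Sm, ?_⟩
  intro K iK hK
  have h1 : @graphMu n K iK = @graphMu n K (Classical.decRel _) := graphMu_irrel K _ _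
  rw [h1]
  exact Sl K (by rwa [Set.mem_toFinset])

end mugraph
section structural

open SimpleGraph

variable {r : ℕ}

set_option maxHeartbeats 2000000 in
theorem maximizer_iso (hr : 2 ≤ r) (hn2 : 2 ≤ n) (H : SimpleGraph (Fin n))
    [iH : DecidableRel H.Adj] (hH : H.CliqueFree (r+1))
    (hmax : ∀ (K : SimpleGraph (Fin n)) (iK : DecidableRel K.Adj), K.CliqueFree (r+1) →
      @graphMu n K iK ≤ graphMu H) :
    Nonempty (H ≃g turanGraph n r) := by
  classical
  have hn : 0 < n := by omega
  set μ := graphMu H with hμdef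
  -- μ > 0
  have hadj01 : (turanGraph n r).Adj ⟨0, by omega⟩ ⟨1, by omega⟩ := by
    simp only [turanGraph]
    show (0 : ℕ) % r ≠ 1 % r
    rw [Nat.zero_mod, Nat.mod_eq_of_lt (by omega)]
    omega
  have hμpos : 0 < μ :=
    lt_of_lt_of_le (graphMu_pos_of_adj hadj01) (hmax _ _ (turanGraph_cliqueFree (by omega)))
  -- eigenvector
  obtain ⟨z, hz0, hz⟩ := graphMu_eigvec H hn
  set x : Fin n → ℝ := fun i => |z i| with hxdef
  have hxnn : ∀ i, 0 ≤ x i := fun i => abs_nonneg _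
  have hxne : x ≠ 0 := by
    intro h0; apply hz0; funext i
    have := congrFun h0 i
    simpa [hxdef, abs_eq_zero] using this
  have hxx := dotProduct_self_pos' hxne
  have hdd : x ⬝ᵥ x = z ⬝ᵥ z := by
    show ∑ i, x i * x i = ∑ i, z i * z i
    exact Finset.sum_congr rfl fun i _ => by rw [hxdef]; exact abs_mul_abs_self _
  have hRz : z ⬝ᵥ (H.adjMatrix ℝ *ᵥ z) = μ * (z ⬝ᵥ z) := by
    rw [hz, dotProduct_smul]; rfl
  have hRx_ge : z ⬝ᵥ (H.adjMatrix ℝ *ᵥ z) ≤ x ⬝ᵥ (H.adjMatrix ℝ *ᵥ x) := by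
    rw [rayleigh_double, rayleigh_double]
    refine Finset.sum_le_sum fun v _ => Finset.sum_le_sum fun j _ => ?_
    have h1 : z v * z j ≤ x v * x j := by
      rw [hxdef]; dsimp only
      calc z v * z j ≤ |z v * z j| := le_abs_self _
        _ = |z v| * |z j| := abs_mul _ _
    exact mul_le_mul_of_nonneg_left h1 (adjMatrix_nonneg H v j)
  have hRx : x ⬝ᵥ (H.adjMatrix ℝ *ᵥ x) = μ * (x ⬝ᵥ x) := by
    refine le_antisymm (graphMu_ray H hn x) ?_
    rw [hdd, ← hRz]; exact hRx_ge
  have hxeig : H.adjMatrix ℝ *ᵥ x = μ • x := graphMu_eig_of_ray H hn hxne hRx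
  have hxeigv : ∀ v, (H.adjMatrix ℝ *ᵥ x) v = μ * x v := fun v => by rw [hxeig]; rfl
  -- positivity of x
  have hxpos : ∀ v, 0 < x v := by
    by_contra hcon
    push_neg at hcon; obtain ⟨v, hv⟩ := hcon
    have hxv : x v = 0 := le_antisymm hv (hxnn v)
    obtain ⟨u, hu⟩ : ∃ u, x u ≠ 0 := by
      by_contra hall; push_neg at hall; exact hxne (funext hall)
    have hxu : 0 < x u := (hxnn u).lt_of_ne (Ne.symm hu)
    have hKcf : (H.replaceVertex u v).CliqueFree (r+1) := hH.replaceVertex u v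
    have hKray : x ⬝ᵥ ((H.replaceVertex u v).adjMatrix ℝ *ᵥ x) = μ * (x ⬝ᵥ x) := by
      rw [replace_rayleigh, hRx, hxv]; ring
    have hKle : graphMu (H.replaceVertex u v) ≤ μ := hmax (H.replaceVertex u v) _ hKcf
    have hKge : μ ≤ graphMu (H.replaceVertex u v) := by
      have h2 := graphMu_ray (H.replaceVertex u v) hn x
      rw [hKray] at h2
      exact le_of_mul_le_mul_right (by linarith) hxx
    have hKeq : graphMu (H.replaceVertex u v) = μ := le_antisymm hKle hKge
    have hKeig : (H.replaceVertex u v).adjMatrix ℝ *ᵥ x = μ • x := by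
      have h3 := graphMu_eig_of_ray (H.replaceVertex u v) hn hxne (by rw [hKray, hKeq])
      rw [hKeq] at h3; exact h3
    have h1 : ((H.replaceVertex u v).adjMatrix ℝ *ᵥ x) v = μ * x v := by rw [hKeig]; rfl
    rw [replace_mulVec_t u v x, hxeigv u, hxv] at h1
    nlinarith [hμpos, hxu]
  -- Claim E
  have hAxle : ∀ s t : Fin n, ¬H.Adj s t → (H.adjMatrix ℝ *ᵥ x) s ≤ (H.adjMatrix ℝ *ᵥ x) t := by
    intro s t hnadj
    by_cases hst : s = t
    · subst hst; exact le_refl _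
    have hKle : graphMu (H.replaceVertex s t) ≤ μ := hmax (H.replaceVertex s t) _ (hH.replaceVertex s t)
    have hAst : H.adjMatrix ℝ s t = 0 := by simp [hnadj]
    have h1 : x ⬝ᵥ ((H.replaceVertex s t).adjMatrix ℝ *ᵥ x)
        = μ * (x ⬝ᵥ x) + 2 * x t * ((H.adjMatrix ℝ *ᵥ x) s - (H.adjMatrix ℝ *ᵥ x) t) := by
      rw [replace_rayleigh, hRx, hAst]; ring
    have h2 := graphMu_ray (H.replaceVertex s t) hn x
    rw [h1] at h2
    nlinarith [hxpos t, mul_le_mul_of_nonneg_right hKle hxx.le]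
  have hxeq : ∀ s t : Fin n, ¬H.Adj s t → x s = x t := by
    intro s t hnadj
    have h1 := hAxle s t hnadj
    have h2 := hAxle t s (fun a => hnadj a.symm)
    have h3 := le_antisymm h1 h2
    rw [hxeigv s, hxeigv t] at h3
    exact mul_left_cancel₀ (ne_of_gt hμpos) h3
  -- transitivity of non-adjacency
  have htrans : ∀ s t u : Fin n, ¬H.Adj t s → ¬H.Adj s u → ¬H.Adj t u := by
    intro s t u hts hsu htu
    have hst : s ≠ t := fun h => by subst h; exact hsu htu
    have hsune : s ≠ u := fun h => by subst h; exact hts htu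
    have htune : t ≠ u := htu.ne
    have hust : ¬H.Adj s t := fun a => hts a.symm
    have hAst : H.adjMatrix ℝ s t = 0 := by simp [hust]
    have hAss : H.adjMatrix ℝ s s = 0 := by simp
    have hAus : H.adjMatrix ℝ u s = 0 := by simp; exact fun a => hsu a.symm
    have hAut : H.adjMatrix ℝ u t = 1 := by simp; exact htu.symm
    have hxst : x s = x t := hxeq s t hust
    have hxsu : x s = x u := hxeq s u hsu
    have hcf2 : ((H.replaceVertex s t).replaceVertex s u).CliqueFree (r+1) :=
      (hH.replaceVertex s t).replaceVertex s u
    have hR1 : x ⬝ᵥ ((H.replaceVertex s t).adjMatrix ℝ *ᵥ x) = μ * (x ⬝ᵥ x) := by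
      rw [replace_rayleigh, hRx, hAst, hxeigv s, hxeigv t, hxst]; ring
    have hA1su : (H.replaceVertex s t).adjMatrix ℝ s u = 0 := by
      rw [replace_adjMatrix_of_ne hst (Ne.symm htune)]
      simp [hsu]
    have h1s : ((H.replaceVertex s t).adjMatrix ℝ *ᵥ x) s = μ * x s := by
      rw [replace_mulVec hst x, hxeigv s, hAss, hAst]; ring
    have h1u : ((H.replaceVertex s t).adjMatrix ℝ *ᵥ x) u = μ * x u - x t := by
      rw [replace_mulVec (Ne.symm htune) x, hxeigv u, hAus, hAut]; ring
    have hR2 : x ⬝ᵥ (((H.replaceVertex s t).replaceVertex s u).adjMatrix ℝ *ᵥ x)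
        = μ * (x ⬝ᵥ x) + 2 * (x u * x t) := by
      rw [replace_rayleigh, hR1, h1s, h1u, hA1su, hxsu]; ring
    have hle := hmax ((H.replaceVertex s t).replaceVertex s u) inferInstance hcf2
    have h2 := graphMu_ray ((H.replaceVertex s t).replaceVertex s u) hn x
    rw [hR2] at h2
    nlinarith [hxpos u, hxpos t, mul_le_mul_of_nonneg_right hle hxx.le]
  -- the partition
  let sd : Setoid (Fin n) := ⟨(¬H.Adj · ·),
    ⟨fun a => by simp, fun {a b} h => fun ha => h ha.symm, fun {a b c} h1 h2 => htrans b a c h1 h2⟩⟩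
  let fp := Finpartition.ofSetoid sd
  have part_iff : ∀ s t : Fin n, ¬H.Adj s t ↔ fp.part s = fp.part t := by
    intro s t
    change sd.r s t ↔ _
    rw [← Finpartition.mem_part_ofSetoid_iff_rel]
    change t ∈ fp.part s ↔ _
    rw [fp.mem_part_iff_part_eq_part (Finset.mem_univ t) (Finset.mem_univ s), eq_comm]
  have hmem : ∀ v j : Fin n, j ∈ fp.part v ↔ ¬H.Adj v j := fun v j =>
    Finpartition.mem_part_ofSetoid_iff_rel
  have hconst : ∀ v : Fin n, ∀ j ∈ fp.part v, x j = x v :=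
    fun v j hj => (hxeq v j ((hmem v j).1 hj)).symm
  -- eigen-sum relation
  have hsum : ∀ v : Fin n, μ * x v + (#(fp.part v) : ℝ) * x v = ∑ j, x j := by
    intro v
    have hpartsum : ∑ j ∈ fp.part v, x j = (#(fp.part v) : ℝ) * x v := by
      rw [Finset.sum_congr rfl (hconst v), Finset.sum_const, nsmul_eq_mul]
    have hsplit : ∀ j : Fin n, H.adjMatrix ℝ v j * x j + (if j ∈ fp.part v then x j else 0) = x j := by
      intro j
      by_cases hadj : H.Adj v j
      · have hnm : j ∉ fp.part v := fun hj => ((hmem v j).1 hj) hadj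
        simp [hadj, hnm]
      · have hm : j ∈ fp.part v := (hmem v j).2 hadj
        simp [hadj, hm]
    have hsp := Finset.sum_congr rfl (fun j (_ : j ∈ Finset.univ) => hsplit j)
    rw [Finset.sum_add_distrib] at hsp
    rw [Finset.sum_ite_mem, Finset.univ_inter, hpartsum] at hsp
    have hAv : ∑ j, H.adjMatrix ℝ v j * x j = μ * x v := by
      rw [show ∑ j, H.adjMatrix ℝ v j * x j = (H.adjMatrix ℝ *ᵥ x) v from rfl, hxeigv v]
    rw [hAv] at hsp
    exact hsp
  -- equipartition
  have hequi : fp.IsEquipartition := by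
    by_contra hne
    rw [Finpartition.not_isEquipartition] at hne
    obtain ⟨large, hl, small, hs, ineq⟩ := hne
    obtain ⟨t, ht⟩ := fp.nonempty_of_mem_parts hl
    obtain ⟨s, hsm⟩ := fp.nonempty_of_mem_parts hs
    have large_eq := fp.part_eq_of_mem hl ht
    have small_eq := fp.part_eq_of_mem hs hsm
    have hadj : H.Adj s t := by
      by_contra hnadj
      rw [part_iff s t, small_eq, large_eq] at hnadj
      rw [hnadj] at ineq; omega
    have hst : s ≠ t := hadj.ne
    have hAst : H.adjMatrix ℝ s t = 1 := by simp [hadj]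
    have hle := hmax (H.replaceVertex s t) inferInstance (hH.replaceVertex s t)
    have hray := graphMu_ray (H.replaceVertex s t) hn x
    have hRK : x ⬝ᵥ ((H.replaceVertex s t).adjMatrix ℝ *ᵥ x)
        = μ * (x ⬝ᵥ x) + 2 * x t * (μ * x s - μ * x t - x t) := by
      rw [replace_rayleigh, hRx, hAst, hxeigv s, hxeigv t]; ring
    rw [hRK] at hray
    have hkey : μ * x s - μ * x t - x t ≤ 0 := by
      nlinarith [hxpos t, mul_le_mul_of_nonneg_right hle hxx.le]
    have hsum_s := hsum s; have hsum_t := hsum t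
    rw [small_eq] at hsum_s
    rw [large_eq] at hsum_t
    have hdisj : Disjoint small large := by
      refine fp.disjoint hs hl ?_
      intro heq
      rw [heq] at ineq; omega
    have hXge : (#small : ℝ) * x s + (#large : ℝ) * x t ≤ ∑ j, x j := by
      have hsmall : ∑ j ∈ small, x j = (#small : ℝ) * x s := by
        rw [← small_eq, Finset.sum_congr rfl (hconst s), Finset.sum_const, nsmul_eq_mul, small_eq]
      have hlarge : ∑ j ∈ large, x j = (#large : ℝ) * x t := by
        rw [← large_eq, Finset.sum_congr rfl (hconst t), Finset.sum_const, nsmul_eq_mul, large_eq]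
      calc (#small : ℝ) * x s + (#large : ℝ) * x t = ∑ j ∈ small ∪ large, x j := by
            rw [Finset.sum_union hdisj, hsmall, hlarge]
        _ ≤ ∑ j, x j :=
            Finset.sum_le_sum_of_subset_of_nonneg (Finset.subset_univ _) fun j _ _ => hxnn j
    have ha1 : (1 : ℝ) ≤ #small := by
      have := Finset.card_pos.2 ⟨s, hsm⟩
      exact_mod_cast this
    have hq2 : (#small : ℝ) + 2 ≤ #large := by exact_mod_cast ineq
    set a : ℝ := (#small : ℝ)
    set q : ℝ := (#large : ℝ)
    have e1 : q * x t ≤ μ * x s := by linarith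
    have e2 : (q - 1) * x t ≤ μ * x t := by nlinarith
    have e3 : q - 1 ≤ μ := le_of_mul_le_mul_right (by linarith) (hxpos t)
    have e4 : μ * x s ≤ (μ + 1) * x t := by linarith
    have e5 : μ * (μ + q) * x t ≤ (μ + 1) * (μ + a) * x t := by
      have h6 : (μ + a) * x s = (μ + q) * x t := by linarith
      calc μ * (μ + q) * x t = μ * ((μ + q) * x t) := by ring
        _ = μ * ((μ + a) * x s) := by rw [h6]
        _ = (μ + a) * (μ * x s) := by ring
        _ ≤ (μ + a) * ((μ + 1) * x t) := by
            refine mul_le_mul_of_nonneg_left e4 ?_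
            nlinarith
        _ = (μ + 1) * (μ + a) * x t := by ring
    have e6 : μ * (μ + q) ≤ (μ + 1) * (μ + a) := le_of_mul_le_mul_right e5 (hxpos t)
    have e7 : μ * (q - a - 1) ≤ a := by nlinarith
    have e8 : μ * 1 ≤ μ * (q - a - 1) :=
      mul_le_mul_of_nonneg_left (by linarith) hμpos.le
    linarith
  -- number of parts
  have hcard : #fp.parts = min n r := by
    refine le_antisymm (le_min (fp.card_parts_le_card.trans_eq (by simp)) ?_) ?_
    · by_contra! l
      obtain ⟨z', -, hz'⟩ := fp.exists_subset_part_bijOn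
      have ncf : ¬H.CliqueFree #z' := by
        refine SimpleGraph.IsNClique.not_cliqueFree ⟨fun v hv w hw hne => ?_, rfl⟩
        contrapose! hne
        exact hz'.injOn hv hw (by rwa [← part_iff])
      rw [Finset.card_eq_of_equiv hz'.equiv] at ncf
      exact absurd (hH.mono (Nat.succ_le_of_lt l)) ncf
    · by_contra! l
      rw [lt_min_iff] at l
      have l1 : #fp.parts < #(Finset.univ : Finset (Fin n)) := by
        rw [Finset.card_univ, Fintype.card_fin]; exact l.1
      obtain ⟨c1, -, c2, -, hne, he⟩ := Finset.exists_ne_map_eq_of_card_lt_of_maps_to l1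
        (fun a _ => fp.part_mem.2 (Finset.mem_univ a))
      have hnadj12 : ¬H.Adj c1 c2 := (part_iff c1 c2).2 he
      have cfr : H.CliqueFree r := by
        simp_rw [← SimpleGraph.cliqueFinset_eq_empty_iff, SimpleGraph.cliqueFinset,
          Finset.filter_eq_empty_iff, Finset.mem_univ, forall_true_left,
          SimpleGraph.isNClique_iff, and_comm, not_and, SimpleGraph.isClique_iff, Set.Pairwise]
        intro z' zc; push_neg
        simp_rw [part_iff]
        exact Finset.exists_ne_map_eq_of_card_lt_of_maps_to (zc.symm ▸ l.2)
          fun a _ => fp.part_mem.2 (Finset.mem_univ a)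
      have hKcf : (H ⊔ edge c1 c2).CliqueFree (r+1) := cfr.sup_edge c1 c2
      have hle := hmax (H ⊔ SimpleGraph.edge c1 c2) inferInstance hKcf
      have hray := graphMu_ray (H ⊔ edge c1 c2) hn x
      have hRK := sup_edge_rayleigh hne hnadj12 x
      rw [hRx] at hRK
      rw [hRK] at hray
      nlinarith [hxpos c1, hxpos c2, mul_le_mul_of_nonneg_right hle hxx.le]
  -- build the isomorphism
  have key : Nonempty (H ≃g turanGraph #(Finset.univ : Finset (Fin n)) r) := by
    obtain ⟨zm, zp⟩ := hequi.exists_partPreservingEquiv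
    refine ⟨⟨(Equiv.subtypeUnivEquiv Finset.mem_univ).symm.trans zm, ?_⟩⟩
    intro a b
    simp_rw [turanGraph, Equiv.trans_apply, Equiv.subtypeUnivEquiv_symm_apply]
    have hzp := zp ⟨a, Finset.mem_univ a⟩ ⟨b, Finset.mem_univ b⟩
    rw [← part_iff] at hzp
    rw [← not_iff_not, not_ne_iff, hzp, hcard]
    rcases le_or_gt r n with c | c
    · rw [min_eq_right c]
    · have lc : ∀ y : Fin n, (zm ⟨y, Finset.mem_univ y⟩ : ℕ) < n := fun y => by
        have h9 := (zm ⟨y, Finset.mem_univ y⟩).2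
        simpa using h9
      rw [min_eq_left c.le, Nat.mod_eq_of_lt (lc a), Nat.mod_eq_of_lt (lc b),
        ← Nat.mod_eq_of_lt ((lc a).trans c), ← Nat.mod_eq_of_lt ((lc b).trans c)]; simp only [Nat.mod_mod]
  rwa [Finset.card_univ, Fintype.card_fin] at key

end structural
section main

open SimpleGraph

theorem turan_spectral {n r : ℕ} (hr : 0 < r) (G : SimpleGraph (Fin n))
    [DecidableRel G.Adj] (hG : G.CliqueFree (r + 1)) :
    graphMu G ≤ graphMu (SimpleGraph.turanGraph n r) ∧
      (graphMu G = graphMu (SimpleGraph.turanGraph n r) ↔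
        Nonempty (G ≃g SimpleGraph.turanGraph n r)) := by
  classical
  by_cases hdeg : n ≤ 1 ∨ r = 1
  · have hGT : G = turanGraph n r := by
      ext a b
      simp only [turanGraph]
      constructor
      · intro hab
        rcases hdeg with h | h
        · have ha := a.isLt; have hb := b.isLt
          exact absurd (Fin.ext (show a.val = b.val by omega)) hab.ne
        · subst h
          rw [SimpleGraph.cliqueFree_two] at hG
          rw [hG] at hab
          exact absurd hab (by simp)
      · intro hab
        rcases hdeg with h | h
        · have ha := a.isLt; have hb := b.isLt
          have : a = b := Fin.ext (by omega)
          rw [this] at hab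
          exact absurd rfl hab
        · subst h
          simp [Nat.mod_one] at hab
    refine ⟨le_of_eq (graphMu_congr _ _ hGT), ?_, fun _ => graphMu_congr _ _ hGT⟩
    intro _
    exact ⟨hGT ▸ (Iso.refl : G ≃g G)⟩
  · push_neg at hdeg
    obtain ⟨hn1, hr1⟩ := hdeg
    have hn2 : 2 ≤ n := by omega
    have hr2 : 2 ≤ r := by omega
    obtain ⟨Hm, iHm, hHcf, hHmax⟩ := exists_mu_max hr n
    obtain ⟨e⟩ := @maximizer_iso n r hr2 hn2 Hm iHm hHcf hHmax
    have hμT : @graphMu n Hm iHm = graphMu (turanGraph n r) := @graphMu_iso n Hm _ iHm _ e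
    refine ⟨(hHmax G _ hG).trans_eq hμT, ?_, ?_⟩
    · intro heq
      have hmaxG : ∀ (K : SimpleGraph (Fin n)) (iK : DecidableRel K.Adj),
          K.CliqueFree (r+1) → @graphMu n K iK ≤ graphMu G := by
        intro K iK hK
        exact (hHmax K iK hK).trans_eq (hμT.trans heq.symm)
      exact @maximizer_iso n r hr2 hn2 G _ hG hmaxG
    · rintro ⟨f⟩
      exact graphMu_iso f

end main
end

section
/- The spectral radius of the r-partite Turán graph T_r(n) is the largest root x of the equation x^r = Σ_{s=2}^{r} (s-1) k_s(T_r(n)) x^{r-s}, where k_s denotes the number of s-cliques. -/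
namespace TuranChar

open SimpleGraph Finset Matrix

/-! ### Part sizes and clique counting for the Turán graph -/

def tpart (n r i : ℕ) : Finset (Fin n) := Finset.univ.filter (fun v => (v : ℕ) % r = i)

lemma mem_tpart {n r i : ℕ} {v : Fin n} : v ∈ tpart n r i ↔ (v : ℕ) % r = i := by
  simp [tpart]

lemma turan_adj {n r : ℕ} (v w : Fin n) :
    (turanGraph n r).Adj v w ↔ (v : ℕ) % r ≠ (w : ℕ) % r := by
  simp [turanGraph]

def res {n : ℕ} (r : ℕ) (v : Fin n) : ℕ := (v : ℕ) % r

lemma clique_resInjOn {n r : ℕ} {c : Finset (Fin n)}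
    (hc : (turanGraph n r).IsClique (c : Set (Fin n)))
    {u v : Fin n} (hu : u ∈ c) (hv : v ∈ c) (h : (u : ℕ) % r = (v : ℕ) % r) : u = v := by
  by_contra hne
  exact (turan_adj u v).1 (hc hu hv hne) h

lemma clique_exu {n r : ℕ} {c : Finset (Fin n)}
    (hc : (turanGraph n r).IsClique (c : Set (Fin n)))
    {i : ℕ} (hi : i ∈ c.image (res r)) :
    ∃! v, v ∈ c ∧ (v : ℕ) % r = i := by
  obtain ⟨v, hv, hvi⟩ := Finset.mem_image.1 hi
  exact ⟨v, ⟨hv, hvi⟩, fun w ⟨hw, hwi⟩ => clique_resInjOn hc hw hv (hwi.trans hvi.symm)⟩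

lemma fiber_count {n r : ℕ} (s : ℕ) (t : Finset ℕ) (htc : t.card = s) :
    (((turanGraph n r).cliqueFinset s).filter (fun c => c.image (res r) = t)).card
      = ∏ i ∈ t, (tpart n r i).card := by
  classical
  rw [← Finset.card_pi]
  symm
  apply Finset.card_bij (fun f _ => t.attach.image (fun i => f i.1 i.2))
  · intro f hf
    rw [Finset.mem_pi] at hf
    have hres : ∀ (i) (hi : i ∈ t), ((f i hi : Fin n) : ℕ) % r = i := fun i hi =>
      mem_tpart.1 (hf i hi)
    rw [Finset.mem_filter, mem_cliqueFinset_iff, isNClique_iff]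
    have hinj : ∀ (a b : {x // x ∈ t}), f a.1 a.2 = f b.1 b.2 → a = b := by
      intro ⟨i, hi⟩ ⟨j, hj⟩ h
      have : i = j := by rw [← hres i hi, ← hres j hj, h]
      subst this; rfl
    refine ⟨⟨?_, ?_⟩, ?_⟩
    · intro u hu v hv huv
      simp only [Finset.coe_image, Set.mem_image, Finset.mem_coe, Finset.mem_attach] at hu hv
      obtain ⟨⟨i, hi⟩, -, rfl⟩ := hu
      obtain ⟨⟨j, hj⟩, -, rfl⟩ := hv
      rw [turan_adj, hres i hi, hres j hj]
      intro h; exact huv (by subst h; rfl)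
    · rw [Finset.card_image_of_injective _ hinj, Finset.card_attach, htc]
    · ext i
      simp only [Finset.image_image, Finset.mem_image, Finset.mem_attach, true_and]
      constructor
      · rintro ⟨⟨j, hj⟩, rfl⟩
        simpa [Function.comp, res, hres j hj] using hj
      · intro hi
        exact ⟨⟨i, hi⟩, by simp [Function.comp, res, hres i hi]⟩
  · intro f₁ h₁ f₂ h₂ heq
    rw [Finset.mem_pi] at h₁ h₂
    funext i hi
    have m1 : f₁ i hi ∈ t.attach.image (fun j => f₂ j.1 j.2) := by
      rw [← heq]; exact Finset.mem_image.2 ⟨⟨i, hi⟩, Finset.mem_attach _ _, rfl⟩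
    obtain ⟨⟨j, hj⟩, -, hji⟩ := Finset.mem_image.1 m1
    have : j = i := by
      rw [← mem_tpart.1 (h₂ j hj), hji, mem_tpart.1 (h₁ i hi)]
    subst this
    exact hji.symm
  · intro c hc
    rw [Finset.mem_filter] at hc
    obtain ⟨hcf, hct⟩ := hc
    have hcl := (mem_cliqueFinset_iff.1 hcf).1
    refine ⟨fun i hi => Finset.choose (fun v => (v : ℕ) % r = i) c
      (clique_exu hcl (hct ▸ hi)), ?_, ?_⟩
    · rw [Finset.mem_pi]
      intro i hi
      exact mem_tpart.2 (Finset.choose_property (fun v : Fin n => (v : ℕ) % r = i) c _)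
    · ext v
      simp only [Finset.mem_image, Finset.mem_attach, true_and]
      constructor
      · rintro ⟨⟨i, hi⟩, rfl⟩
        exact Finset.choose_mem _ _ _
      · intro hv
        have hi : (v : ℕ) % r ∈ t := hct ▸ Finset.mem_image_of_mem _ hv
        refine ⟨⟨(v : ℕ) % r, hi⟩, ?_⟩
        exact ((clique_exu hcl (hct ▸ hi)).unique
          ⟨Finset.choose_mem (fun w : Fin n => (w : ℕ) % r = (v : ℕ) % r) c _,
           Finset.choose_property (fun w : Fin n => (w : ℕ) % r = (v : ℕ) % r) c _⟩ ⟨hv, rfl⟩)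

lemma clique_count {n r : ℕ} (hr : 0 < r) (s : ℕ) :
    ((turanGraph n r).cliqueFinset s).card
      = ∑ t ∈ Finset.powersetCard s (Finset.range r), ∏ i ∈ t, (tpart n r i).card := by
  classical
  rw [Finset.card_eq_sum_card_fiberwise (f := fun c => c.image (res r))
    (t := Finset.powersetCard s (Finset.range r)) ?_]
  · apply Finset.sum_congr rfl
    intro t ht
    rw [Finset.mem_powersetCard] at ht
    exact fiber_count s t ht.2
  · intro c hc
    obtain ⟨hcl, hcard⟩ := mem_cliqueFinset_iff.1 hc
    rw [Finset.mem_coe, Finset.mem_powersetCard]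
    constructor
    · intro i hi
      obtain ⟨v, _, hvi⟩ := Finset.mem_image.1 hi
      exact Finset.mem_range.2 (hvi ▸ Nat.mod_lt _ hr)
    · rw [← hcard]
      apply Finset.card_image_of_injOn
      intro u hu v hv h
      exact clique_resInjOn hcl hu hv h

/-! ### Symmetric function identities -/

lemma prod_expand (u : Finset ℕ) (a : ℕ → ℝ) (y : ℝ) :
    ∏ i ∈ u, (y + a i) = ∑ t ∈ u.powerset, (∏ i ∈ t, a i) * y ^ (u.card - t.card) := by
  classical
  simp_rw [add_comm y]
  rw [Finset.prod_add]
  apply Finset.sum_congr rfl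
  intro t ht
  rw [Finset.mem_powerset] at ht
  rw [Finset.prod_const, Finset.card_sdiff_of_subset ht]

lemma sum_expand (u : Finset ℕ) (a : ℕ → ℝ) (y : ℝ) :
    ∑ i ∈ u, a i * ∏ j ∈ u.erase i, (y + a j)
      = ∑ t ∈ u.powerset, (t.card : ℝ) * (∏ i ∈ t, a i) * y ^ (u.card - t.card) := by
  classical
  induction u using Finset.induction with
  | empty => simp
  | insert x u hx ih =>
    rw [Finset.sum_insert hx, Finset.sum_powerset_insert hx, Finset.erase_insert hx]
    have hcard : (insert x u).card = u.card + 1 := Finset.card_insert_of_notMem hx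
    have step : ∀ i ∈ u, a i * ∏ j ∈ (insert x u).erase i, (y + a j)
        = (y + a x) * (a i * ∏ j ∈ u.erase i, (y + a j)) := by
      intro i hi
      have hix : i ≠ x := fun h => hx (h ▸ hi)
      rw [Finset.erase_insert_of_ne hix.symm,
        Finset.prod_insert (fun h => hx (Finset.mem_of_mem_erase h))]
      ring
    rw [Finset.sum_congr rfl step, ← Finset.mul_sum, ih, prod_expand, Finset.mul_sum,
      Finset.mul_sum]
    rw [← Finset.sum_add_distrib, ← Finset.sum_add_distrib]
    apply Finset.sum_congr rfl
    intro t ht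
    rw [Finset.mem_powerset] at ht
    have hxt : x ∉ t := fun h => hx (ht h)
    have hle : t.card ≤ u.card := Finset.card_le_card ht
    have h1 : (insert x u).card - t.card = (u.card - t.card) + 1 := by rw [hcard]; omega
    have h2 : (insert x u).card - (insert x t).card = u.card - t.card := by
      rw [hcard, Finset.card_insert_of_notMem hxt]; omega
    rw [h1, h2, Finset.card_insert_of_notMem hxt, Finset.prod_insert hxt, pow_succ]
    push_cast
    ring

lemma key_identity {n r : ℕ} (hr : 0 < r) (x : ℝ) :
    ∏ i ∈ Finset.range r, (x + ((tpart n r i).card : ℝ))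
      - ∑ i ∈ Finset.range r, ((tpart n r i).card : ℝ) *
          ∏ j ∈ (Finset.range r).erase i, (x + ((tpart n r j).card : ℝ))
    = x ^ r - ∑ s ∈ Finset.Icc 2 r,
        ((s : ℝ) - 1) * (((turanGraph n r).cliqueFinset s).card : ℝ) * x ^ (r - s) := by
  classical
  set a : ℕ → ℝ := fun i => ((tpart n r i).card : ℝ) with ha
  rw [prod_expand, sum_expand, ← Finset.sum_sub_distrib]
  have hrc : (Finset.range r).card = r := Finset.card_range r
  rw [show (∑ t ∈ (Finset.range r).powerset,
      ((∏ i ∈ t, a i) * x ^ ((Finset.range r).card - t.card)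
        - (t.card : ℝ) * (∏ i ∈ t, a i) * x ^ ((Finset.range r).card - t.card)))
    = ∑ s ∈ Finset.range (r + 1), (1 - (s : ℝ)) *
        (∑ t ∈ Finset.powersetCard s (Finset.range r), ∏ i ∈ t, a i) * x ^ (r - s) from ?_]
  · have hsplit : Finset.range (r + 1) = insert 0 (insert 1 (Finset.Icc 2 r)) := by
      ext z; simp only [Finset.mem_range, Finset.mem_insert, Finset.mem_Icc]; omega
    rw [hsplit, Finset.sum_insert (by simp), Finset.sum_insert (by simp)]
    have h0 : ∑ t ∈ Finset.powersetCard 0 (Finset.range r), ∏ i ∈ t, a i = 1 := by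
      simp [Finset.powersetCard_zero]
    rw [h0]
    simp only [Nat.cast_zero, sub_zero, one_mul, mul_one, Nat.cast_one, sub_self, zero_mul]
    rw [zero_add, sub_eq_add_neg, ← Finset.sum_neg_distrib]
    congr 1
    apply Finset.sum_congr rfl
    intro s hs
    rw [clique_count hr s]
    push_cast
    ring
  · rw [Finset.sum_powerset]
    apply Finset.sum_congr (by rw [hrc])
    intro s hs
    rw [Finset.mul_sum, Finset.sum_mul]
    apply Finset.sum_congr rfl
    intro t ht
    have htc : t.card = s := (Finset.mem_powersetCard.1 ht).2
    rw [hrc, htc]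
    ring

/-! ### Eigenvalue machinery -/

section eig
variable {N : ℕ} (A : Matrix (Fin N) (Fin N) ℝ)

lemma eig_toLin'_iff (x : ℝ) :
    Module.End.HasEigenvalue (Matrix.toLin' A) x ↔ ∃ v : Fin N → ℝ, v ≠ 0 ∧ A *ᵥ v = x • v := by
  rw [Module.End.hasEigenvalue_iff, Submodule.ne_bot_iff]
  constructor
  · rintro ⟨v, hv, hv0⟩
    exact ⟨v, hv0, by rw [← Matrix.toLin'_apply]; exact Module.End.mem_eigenspace_iff.1 hv⟩
  · rintro ⟨v, hv0, hv⟩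
    exact ⟨v, Module.End.mem_eigenspace_iff.2 (by rw [Matrix.toLin'_apply]; exact hv), hv0⟩

lemma eig_euclidean_eq_lin' (x : ℝ) :
    Module.End.HasEigenvalue (Matrix.toEuclideanLin A) x
      ↔ Module.End.HasEigenvalue (Matrix.toLin' A) x := by
  rw [Module.End.hasEigenvalue_iff, Module.End.hasEigenvalue_iff, Submodule.ne_bot_iff,
    Submodule.ne_bot_iff]
  constructor
  · rintro ⟨v, hv, hv0⟩
    refine ⟨WithLp.ofLp v, Module.End.mem_eigenspace_iff.2 ?_,
      fun h => hv0 (by simpa using congrArg (WithLp.toLp 2) h)⟩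
    have := congrArg WithLp.ofLp (Module.End.mem_eigenspace_iff.1 hv)
    rw [Matrix.toLin'_apply]
    simpa [Matrix.toEuclideanLin_apply] using this
  · rintro ⟨v, hv, hv0⟩
    refine ⟨WithLp.toLp 2 v, Module.End.mem_eigenspace_iff.2 ?_,
      fun h => hv0 (by simpa using congrArg WithLp.ofLp h)⟩
    rw [Matrix.toEuclideanLin_apply]
    have := Module.End.mem_eigenspace_iff.1 hv
    rw [Matrix.toLin'_apply] at this
    simp [this]

noncomputable def muSup : ℝ :=
  ⨆ x : {x : EuclideanSpace ℝ (Fin N) // x ≠ 0},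
    RCLike.re (inner (𝕜 := ℝ) ((Matrix.toEuclideanLin A) x) x) /
      ‖(x : EuclideanSpace ℝ (Fin N))‖ ^ 2

lemma hasEig_muSup (hA : A.IsHermitian) (hN : 0 < N) :
    Module.End.HasEigenvalue (Matrix.toEuclideanLin A) (muSup A) := by
  haveI : Nonempty (Fin N) := ⟨⟨0, hN⟩⟩
  haveI : Nontrivial (EuclideanSpace ℝ (Fin N)) := by infer_instance
  exact (Matrix.isHermitian_iff_isSymmetric.1 hA).hasEigenvalue_iSup_of_finiteDimensional

lemma rayleigh_le_muSup (v : EuclideanSpace ℝ (Fin N)) (hv : v ≠ 0) :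
    inner (𝕜 := ℝ) ((Matrix.toEuclideanLin A) v) v / ‖v‖ ^ 2 ≤ muSup A := by
  have hbdd : BddAbove (Set.range fun x : {x : EuclideanSpace ℝ (Fin N) // x ≠ 0} =>
      RCLike.re (inner (𝕜 := ℝ) ((Matrix.toEuclideanLin A) x) x) /
        ‖(x : EuclideanSpace ℝ (Fin N))‖ ^ 2) := by
    refine ⟨‖LinearMap.toContinuousLinearMap (Matrix.toEuclideanLin A)‖, ?_⟩
    rintro y ⟨⟨x, hx⟩, rfl⟩
    simp only [RCLike.re_to_real]
    rw [div_le_iff₀ (pow_pos (norm_pos_iff.2 hx) 2)]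
    calc inner (𝕜 := ℝ) ((Matrix.toEuclideanLin A) x) x
        ≤ ‖(Matrix.toEuclideanLin A) x‖ * ‖x‖ := real_inner_le_norm _ _
      _ ≤ (‖LinearMap.toContinuousLinearMap (Matrix.toEuclideanLin A)‖ * ‖x‖) * ‖x‖ := by
          gcongr
          exact (LinearMap.toContinuousLinearMap (Matrix.toEuclideanLin A)).le_opNorm x
      _ = ‖LinearMap.toContinuousLinearMap (Matrix.toEuclideanLin A)‖ * ‖x‖ ^ 2 := by ring
  have := le_ciSup hbdd ⟨v, hv⟩
  simp only [RCLike.re_to_real] at this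
  exact this

lemma eig_le_muSup (x : ℝ)
    (hx : Module.End.HasEigenvalue (Matrix.toEuclideanLin A) x) : x ≤ muSup A := by
  obtain ⟨v, hv⟩ := hx.exists_hasEigenvector
  have h1 : inner (𝕜 := ℝ) ((Matrix.toEuclideanLin A) v) v = x * ‖v‖ ^ 2 := by
    rw [hv.apply_eq_smul, real_inner_smul_left, real_inner_self_eq_norm_sq]
  have := rayleigh_le_muSup A v hv.2
  rwa [h1, mul_div_assoc, div_self (pow_pos (norm_pos_iff.2 hv.2) 2).ne', mul_one] at this

end eig

/-! ### Turán graph specific sums -/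

lemma mulVec_turan {n r : ℕ} (v : Fin n → ℝ) (u : Fin n) :
    ((turanGraph n r).adjMatrix ℝ *ᵥ v) u
      = (∑ w, v w) - ∑ w ∈ tpart n r ((u : ℕ) % r), v w := by
  classical
  have h1 : ((turanGraph n r).adjMatrix ℝ *ᵥ v) u
      = ∑ w : Fin n, if (w : ℕ) % r = (u : ℕ) % r then 0 else v w := by
    rw [Matrix.mulVec, dotProduct]
    apply Finset.sum_congr rfl
    intro w _
    rw [SimpleGraph.adjMatrix_apply]
    by_cases h : (w : ℕ) % r = (u : ℕ) % r
    · rw [if_pos h, if_neg (fun hadj => ((turan_adj u w).1 hadj) h.symm), zero_mul]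
    · rw [if_neg h, if_pos ((turan_adj u w).2 (fun h2 => h h2.symm)), one_mul]
  have h2 : ∑ w ∈ tpart n r ((u : ℕ) % r), v w
      = ∑ w : Fin n, if (w : ℕ) % r = (u : ℕ) % r then v w else 0 := by
    rw [tpart, Finset.sum_filter]
  rw [h1, h2, eq_sub_iff_add_eq, ← Finset.sum_add_distrib]
  apply Finset.sum_congr rfl
  intro w _
  by_cases h : (w : ℕ) % r = (u : ℕ) % r <;> simp [h]

lemma sum_tparts {n r : ℕ} (hr : 0 < r) (v : Fin n → ℝ) :
    ∑ i ∈ Finset.range r, ∑ w ∈ tpart n r i, v w = ∑ w, v w := by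
  classical
  exact Finset.sum_fiberwise_of_maps_to
    (fun w _ => Finset.mem_range.2 (Nat.mod_lt _ hr)) v


/-! ### More helpers for the main proof -/

noncomputable def aa (n r i : ℕ) : ℝ := ((tpart n r i).card : ℝ)

lemma aa_nonneg {n r i : ℕ} : 0 ≤ aa n r i := Nat.cast_nonneg _

lemma key_identity' {n r : ℕ} (hr : 0 < r) (x : ℝ) :
    ∏ i ∈ Finset.range r, (x + aa n r i)
      - ∑ i ∈ Finset.range r, aa n r i * ∏ j ∈ (Finset.range r).erase i, (x + aa n r j)
    = x ^ r - ∑ s ∈ Finset.Icc 2 r,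
        ((s : ℝ) - 1) * (((turanGraph n r).cliqueFinset s).card : ℝ) * x ^ (r - s) :=
  key_identity hr x

lemma eigen_eq2 {n r : ℕ} {μ : ℝ} {v : Fin n → ℝ}
    (hv : ((turanGraph n r).adjMatrix ℝ) *ᵥ v = μ • v) (i : ℕ) :
    (μ + aa n r i) * (∑ w ∈ tpart n r i, v w) = aa n r i * (∑ w, v w) := by
  classical
  have eq1 : ∀ u : Fin n, μ * v u = (∑ w, v w) - ∑ w ∈ tpart n r ((u : ℕ) % r), v w := by
    intro u
    have h := congrFun hv u
    rw [mulVec_turan] at h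
    simpa [Pi.smul_apply, smul_eq_mul] using h.symm
  have h2 : μ * (∑ w ∈ tpart n r i, v w)
      = aa n r i * ((∑ w, v w) - ∑ w ∈ tpart n r i, v w) := by
    rw [Finset.mul_sum,
      Finset.sum_congr rfl (fun u hu => by rw [eq1 u, mem_tpart.1 hu]),
      Finset.sum_const, nsmul_eq_mul, aa]
  nlinarith [h2]

lemma sum_div_prod {r : ℕ} (b : ℕ → ℝ) (x : ℝ) (hx : ∀ i ∈ Finset.range r, 0 < x + b i) :
    ∑ i ∈ Finset.range r, b i * ∏ j ∈ (Finset.range r).erase i, (x + b j)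
      = (∑ i ∈ Finset.range r, b i / (x + b i)) * ∏ j ∈ Finset.range r, (x + b j) := by
  rw [Finset.sum_mul]
  apply Finset.sum_congr rfl
  intro i hi
  rw [← Finset.mul_prod_erase _ _ hi, ← mul_assoc, div_mul_cancel₀ _ (hx i hi).ne']

lemma rayleigh_coord {N : ℕ} (A : Matrix (Fin N) (Fin N) ℝ) (v : Fin N → ℝ) (hv : v ≠ 0) :
    (∑ i, (A *ᵥ v) i * v i) / (∑ i, v i * v i) ≤ muSup A := by
  have hv' : WithLp.toLp 2 v ≠ 0 := fun h => hv (by simpa using congrArg WithLp.ofLp h)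
  have h1 := rayleigh_le_muSup A (WithLp.toLp 2 v) hv'
  have h2 : inner (𝕜 := ℝ) ((Matrix.toEuclideanLin A) (WithLp.toLp 2 v))
      (WithLp.toLp 2 v) = ∑ i, (A *ᵥ v) i * v i := by
    rw [Matrix.toEuclideanLin_apply]
    simp only [PiLp.inner_apply, RCLike.inner_apply, starRingEnd_apply, star_trivial]
    exact Finset.sum_congr rfl fun i _ => mul_comm _ _
  have h3 : ‖WithLp.toLp 2 v‖ ^ 2 = ∑ i, v i * v i := by
    rw [← real_inner_self_eq_norm_sq]
    simp only [PiLp.inner_apply, RCLike.inner_apply, starRingEnd_apply, star_trivial]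
  rwa [h2, h3] at h1

lemma graphMu_eq_muSup {n r : ℕ} (hn : 0 < n) :
    graphMu (turanGraph n r) = muSup ((turanGraph n r).adjMatrix ℝ) ∧
    IsGreatest {x : ℝ | Module.End.HasEigenvalue
      (Matrix.toLin' ((turanGraph n r).adjMatrix ℝ)) x}
      (muSup ((turanGraph n r).adjMatrix ℝ)) := by
  have hA : ((turanGraph n r).adjMatrix ℝ).IsHermitian := by
    show _ᴴ = _
    ext i j
    simp only [Matrix.conjTranspose_apply, SimpleGraph.adjMatrix_apply, star_trivial]
    exact if_congr (SimpleGraph.adj_comm _ j i) rfl rfl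
  have hgr : IsGreatest {x : ℝ | Module.End.HasEigenvalue
      (Matrix.toLin' ((turanGraph n r).adjMatrix ℝ)) x}
      (muSup ((turanGraph n r).adjMatrix ℝ)) := by
    constructor
    · exact (eig_euclidean_eq_lin' _ _).1 (hasEig_muSup _ hA hn)
    · intro x hx
      exact eig_le_muSup _ x ((eig_euclidean_eq_lin' _ _).2 hx)
  exact ⟨hgr.csSup_eq, hgr⟩


end TuranChar

theorem turan_char_equation {n r : ℕ} (hr : 0 < r) :
    IsGreatest
      {x : ℝ | x ^ r =
        ∑ s ∈ Finset.Icc 2 r,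
          ((s : ℝ) - 1) * (((SimpleGraph.turanGraph n r).cliqueFinset s).card : ℝ) *
            x ^ (r - s)}
      (graphMu (SimpleGraph.turanGraph n r)) := by
  classical
  have hset : ∀ x : ℝ, (x ^ r =
      ∑ s ∈ Finset.Icc 2 r,
        ((s : ℝ) - 1) * (((SimpleGraph.turanGraph n r).cliqueFinset s).card : ℝ) * x ^ (r - s))
      ↔ (∏ i ∈ Finset.range r, (x + TuranChar.aa n r i)
        = ∑ i ∈ Finset.range r, TuranChar.aa n r i *
            ∏ j ∈ (Finset.range r).erase i, (x + TuranChar.aa n r j)) := by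
    intro x
    rw [← sub_eq_zero (a := x ^ r), ← TuranChar.key_identity' hr x]
    exact sub_eq_zero
  by_cases hmain : 2 ≤ r ∧ 2 ≤ n
  · obtain ⟨hr2, hn2⟩ := hmain
    have hn : 0 < n := by omega
    obtain ⟨hmuEq, hgr⟩ := TuranChar.graphMu_eq_muSup (r := r) hn
    set μ := graphMu (SimpleGraph.turanGraph n r) with hμ
    have hmu1 : (1 : ℝ) ≤ μ := by
      rw [hmuEq]
      set u0 : Fin n := ⟨0, by omega⟩ with hu0
      set u1 : Fin n := ⟨1, by omega⟩ with hu1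
      have hu01 : u0 ≠ u1 := by
        rw [hu0, hu1]; intro h; exact absurd (congrArg Fin.val h) (by norm_num)
      set v1 : Fin n → ℝ := fun w => if w = u0 ∨ w = u1 then 1 else 0 with hv1
      have hv1ne : v1 ≠ 0 := by
        intro h
        have := congrFun h u0
        simp [hv1] at this
      have hsum : ∀ f : Fin n → ℝ, (∑ i, f i * v1 i) = f u0 + f u1 := by
        intro f
        rw [hv1]
        simp_rw [mul_ite, mul_one, mul_zero]
        rw [← Finset.sum_filter]
        have hfil : Finset.univ.filter (fun i : Fin n => i = u0 ∨ i = u1) = {u0, u1} := by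
          ext w
          simp [Finset.mem_filter, Finset.mem_insert, Finset.mem_singleton]
        rw [hfil, Finset.sum_pair hu01]
      have hadj01 : (SimpleGraph.turanGraph n r).Adj u0 u1 := by
        rw [TuranChar.turan_adj, hu0, hu1]
        simp [Nat.mod_eq_of_lt (show 1 < r by omega)]
      have hA00 : (SimpleGraph.turanGraph n r).adjMatrix ℝ u0 u0 = 0 := by
        rw [SimpleGraph.adjMatrix_apply, if_neg (SimpleGraph.irrefl _)]
      have hA11 : (SimpleGraph.turanGraph n r).adjMatrix ℝ u1 u1 = 0 := by
        rw [SimpleGraph.adjMatrix_apply, if_neg (SimpleGraph.irrefl _)]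
      have hA01 : (SimpleGraph.turanGraph n r).adjMatrix ℝ u0 u1 = 1 := by
        rw [SimpleGraph.adjMatrix_apply, if_pos hadj01]
      have hA10 : (SimpleGraph.turanGraph n r).adjMatrix ℝ u1 u0 = 1 := by
        rw [SimpleGraph.adjMatrix_apply, if_pos (hadj01.symm)]
      have hray := TuranChar.rayleigh_coord ((SimpleGraph.turanGraph n r).adjMatrix ℝ) v1 hv1ne
      have e1 : ∀ u : Fin n, (Matrix.mulVec ((SimpleGraph.turanGraph n r).adjMatrix ℝ) v1 u)
          = (SimpleGraph.turanGraph n r).adjMatrix ℝ u u0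
            + (SimpleGraph.turanGraph n r).adjMatrix ℝ u u1 := by
        intro u
        rw [Matrix.mulVec, dotProduct]
        exact hsum _
      have hnum : (∑ i, (Matrix.mulVec ((SimpleGraph.turanGraph n r).adjMatrix ℝ) v1 i) * v1 i)
          = 2 := by
        rw [hsum, e1, e1, hA00, hA01, hA10, hA11]
        norm_num
      have hden : (∑ i, v1 i * v1 i) = 2 := by
        rw [hsum]
        have h1 : v1 u0 = 1 := by rw [hv1]; simp
        have h2 : v1 u1 = 1 := by rw [hv1]; simp
        rw [h1, h2]; norm_num
      rw [hnum, hden] at hray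
      norm_num at hray
      exact hray
    have hmu0 : 0 < μ := by linarith
    have hmem : Module.End.HasEigenvalue
        (Matrix.toLin' ((SimpleGraph.turanGraph n r).adjMatrix ℝ)) μ := by
      rw [hmuEq]; exact hgr.1
    obtain ⟨v, hvne, hveq⟩ :=
      (TuranChar.eig_toLin'_iff ((SimpleGraph.turanGraph n r).adjMatrix ℝ) μ).1 hmem
    have heq2 : ∀ i : ℕ, (μ + TuranChar.aa n r i) * (∑ w ∈ TuranChar.tpart n r i, v w)
        = TuranChar.aa n r i * (∑ w, v w) := fun i => TuranChar.eigen_eq2 hveq i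
    have hpos : ∀ i : ℕ, 0 < μ + TuranChar.aa n r i :=
      fun i => add_pos_of_pos_of_nonneg hmu0 TuranChar.aa_nonneg
    have hSsum : (∑ w, v w) = ∑ i ∈ Finset.range r, ∑ w ∈ TuranChar.tpart n r i, v w :=
      (TuranChar.sum_tparts hr v).symm
    have hSne : (∑ w, v w) ≠ 0 := by
      intro h0
      have hW0 : ∀ i : ℕ, (∑ w ∈ TuranChar.tpart n r i, v w) = 0 := by
        intro i
        have h := heq2 i
        rw [h0, mul_zero] at h
        exact (mul_eq_zero.1 h).resolve_left (hpos i).ne'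
      apply hvne
      funext u
      have h := congrFun hveq u
      rw [TuranChar.mulVec_turan] at h
      have h2 : μ * v u = (∑ w, v w) - ∑ w ∈ TuranChar.tpart n r ((u : ℕ) % r), v w := by
        simpa [Pi.smul_apply, smul_eq_mul] using h.symm
      rw [h0, hW0, sub_zero] at h2
      have := (mul_eq_zero.1 h2).resolve_left hmu0.ne'
      simpa using this
    have hfrac : ∑ i ∈ Finset.range r, TuranChar.aa n r i / (μ + TuranChar.aa n r i) = 1 := by
      have h1 : (∑ w, v w) = (∑ w, v w) *
          ∑ i ∈ Finset.range r, TuranChar.aa n r i / (μ + TuranChar.aa n r i) := by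
        calc (∑ w, v w) = ∑ i ∈ Finset.range r, ∑ w ∈ TuranChar.tpart n r i, v w := hSsum
          _ = ∑ i ∈ Finset.range r, (∑ w, v w) *
              (TuranChar.aa n r i / (μ + TuranChar.aa n r i)) := by
            apply Finset.sum_congr rfl
            intro i hi
            have h2 : (∑ w ∈ TuranChar.tpart n r i, v w)
                = TuranChar.aa n r i * (∑ w, v w) / (μ + TuranChar.aa n r i) := by
              rw [eq_div_iff (hpos i).ne']
              linarith [heq2 i]
            rw [h2]; ring
          _ = (∑ w, v w) * ∑ i ∈ Finset.range r,
              TuranChar.aa n r i / (μ + TuranChar.aa n r i) := by rw [Finset.mul_sum]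
      exact (mul_left_cancel₀ hSne (by rw [mul_one, ← h1])).symm
    have hprod : ∏ i ∈ Finset.range r, (μ + TuranChar.aa n r i)
        = ∑ i ∈ Finset.range r, TuranChar.aa n r i *
            ∏ j ∈ (Finset.range r).erase i, (μ + TuranChar.aa n r j) := by
      rw [TuranChar.sum_div_prod (TuranChar.aa n r) μ (fun i _ => hpos i), hfrac, one_mul]
    constructor
    · exact (hset μ).2 hprod
    · intro x hx
      have hx' := (hset x).1 hx
      by_contra hgt
      push_neg at hgt
      have hxpos : 0 < x := by linarith
      have hxposi : ∀ i ∈ Finset.range r, 0 < x + TuranChar.aa n r i :=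
        fun i _ => add_pos_of_pos_of_nonneg hxpos TuranChar.aa_nonneg
      have hxfrac : ∑ i ∈ Finset.range r, TuranChar.aa n r i / (x + TuranChar.aa n r i) = 1 := by
        have hp : 0 < ∏ j ∈ Finset.range r, (x + TuranChar.aa n r j) :=
          Finset.prod_pos hxposi
        have h1 := TuranChar.sum_div_prod (TuranChar.aa n r) x hxposi
        rw [← hx'] at h1
        exact (mul_right_cancel₀ hp.ne' (by rw [one_mul]; exact h1)).symm
      obtain ⟨i0, hi0mem, hi0⟩ : ∃ i ∈ Finset.range r, 0 < TuranChar.aa n r i := by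
        by_contra hall
        push_neg at hall
        have hz : ∑ i ∈ Finset.range r, TuranChar.aa n r i / (μ + TuranChar.aa n r i) = 0 :=
          Finset.sum_eq_zero fun i hi => by
            rw [le_antisymm (hall i hi) TuranChar.aa_nonneg, zero_div]
        rw [hfrac] at hz
        norm_num at hz
      have hlt : ∑ i ∈ Finset.range r, TuranChar.aa n r i / (x + TuranChar.aa n r i)
          < ∑ i ∈ Finset.range r, TuranChar.aa n r i / (μ + TuranChar.aa n r i) := by
        apply Finset.sum_lt_sum
        · intro i hi
          have h3 : (0:ℝ) ≤ TuranChar.aa n r i := TuranChar.aa_nonneg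
          have h4 : 0 < μ + TuranChar.aa n r i := hpos i
          have h5 : μ + TuranChar.aa n r i ≤ x + TuranChar.aa n r i := by linarith
          gcongr
        · refine ⟨i0, hi0mem, ?_⟩
          have h4 : 0 < μ + TuranChar.aa n r i0 := hpos i0
          have h5 : μ + TuranChar.aa n r i0 < x + TuranChar.aa n r i0 := by linarith
          exact div_lt_div_of_pos_left hi0 h4 h5
      rw [hxfrac, hfrac] at hlt
      exact lt_irrefl 1 hlt
  · push_neg at hmain
    have hcase : r = 1 ∨ n ≤ 1 := by
      by_cases h2 : 2 ≤ r
      · exact Or.inr (by have := hmain h2; omega)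
      · exact Or.inl (by omega)
    have hadj : ∀ u w : Fin n, ¬ (SimpleGraph.turanGraph n r).Adj u w := by
      intro u w
      rw [TuranChar.turan_adj, not_ne_iff]
      rcases hcase with h1 | h1
      · rw [h1, Nat.mod_one, Nat.mod_one]
      · have hu := u.isLt
        have hw := w.isLt
        have h2 : (u : ℕ) = (w : ℕ) := by omega
        rw [h2]
    have hA0 : (SimpleGraph.turanGraph n r).adjMatrix ℝ = 0 := by
      ext u w
      simp [SimpleGraph.adjMatrix_apply, hadj u w]
    have hk0 : ∀ s ∈ Finset.Icc 2 r,
        (((SimpleGraph.turanGraph n r).cliqueFinset s).card : ℝ) = 0 := by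
      intro s hs
      rw [Finset.mem_Icc] at hs
      rw [Nat.cast_eq_zero, Finset.card_eq_zero, Finset.eq_empty_iff_forall_notMem]
      intro c hc
      obtain ⟨hcl, hcc⟩ := SimpleGraph.mem_cliqueFinset_iff.1 hc
      obtain ⟨u, hu, w, hw, huw⟩ := Finset.one_lt_card.1 (by omega : 1 < c.card)
      exact hadj u w (hcl hu hw huw)
    have hsetd : ∀ x : ℝ, (x ^ r =
        ∑ s ∈ Finset.Icc 2 r,
          ((s : ℝ) - 1) * (((SimpleGraph.turanGraph n r).cliqueFinset s).card : ℝ) * x ^ (r - s))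
        ↔ x = 0 := by
      intro x
      rw [Finset.sum_eq_zero (fun s hs => by rw [hk0 s hs, mul_zero, zero_mul])]
      exact pow_eq_zero_iff hr.ne'
    have hmu0 : graphMu (SimpleGraph.turanGraph n r) = 0 := by
      rcases Nat.eq_zero_or_pos n with hn0 | hn
      · subst hn0
        have hempty : {x : ℝ | Module.End.HasEigenvalue
            (Matrix.toLin' ((SimpleGraph.turanGraph 0 r).adjMatrix ℝ)) x} = ∅ := by
          ext x
          simp only [Set.mem_setOf_eq, Set.mem_empty_iff_false, iff_false]
          intro h
          obtain ⟨v, hv0, -⟩ := (TuranChar.eig_toLin'_iff _ x).1 h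
          exact hv0 (funext fun u => u.elim0)
        unfold graphMu
        rw [hempty, Real.sSup_empty]
      · have hsingle : {x : ℝ | Module.End.HasEigenvalue
            (Matrix.toLin' ((SimpleGraph.turanGraph n r).adjMatrix ℝ)) x} = {0} := by
          ext x
          simp only [Set.mem_setOf_eq, Set.mem_singleton_iff]
          rw [TuranChar.eig_toLin'_iff]
          constructor
          · rintro ⟨v, hv0, hveq⟩
            rw [hA0, Matrix.zero_mulVec] at hveq
            exact (smul_eq_zero.1 hveq.symm).resolve_right hv0
          · rintro rfl
            refine ⟨fun _ => 1, ?_, ?_⟩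
            · intro h
              have := congrFun h ⟨0, hn⟩
              norm_num at this
            · rw [hA0, Matrix.zero_mulVec, zero_smul]
        unfold graphMu
        rw [hsingle, csSup_singleton]
    constructor
    · exact (hsetd _).2 hmu0
    · intro y hy
      have hy0 : y = 0 := (hsetd y).1 hy
      rw [hy0, hmu0]
end

section
/- If G is a K_{r+1}-free graph of order n, then μ(G) ≤ (1 - 1/r) n, where μ(G) is the spectral radius of the adjacency matrix of G. -/
open Finset Matrix

section MS
variable {V : Type*} [Fintype V] [DecidableEq V]

lemma one_sub_inv_nonneg {r : ℕ} (hr : 0 < r) : (0:ℝ) ≤ 1 - 1 / r := by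
  have h1 : (1:ℝ) ≤ r := by exact_mod_cast hr
  have h2 : 1 / (r:ℝ) ≤ 1 := by
    rw [div_le_one (by linarith)]; linarith
  linarith

/-- clique case of Motzkin–Straus -/
lemma ms_clique (G : SimpleGraph V) [DecidableRel G.Adj] {r : ℕ} (hr : 0 < r)
    (hG : G.CliqueFree (r + 1)) (w : V → ℝ) (hw : ∀ v, 0 ≤ w v)
    (hcl : ∀ u v : V, w u ≠ 0 → w v ≠ 0 → u ≠ v → G.Adj u v) :
    w ⬝ᵥ (G.adjMatrix ℝ) *ᵥ w ≤ (1 - 1 / r) * (∑ v, w v) ^ 2 := by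
  classical
  set s : Finset V := Finset.univ.filter (fun v => w v ≠ 0) with hs
  have hmem : ∀ v : V, v ∈ s ↔ w v ≠ 0 := by intro v; simp [hs]
  have hT : ∑ v ∈ s, w v = ∑ v, w v := by
    apply Finset.sum_subset (Finset.subset_univ s)
    intro x _ hx
    by_contra h; exact hx ((hmem x).2 h)
  have hclique : G.IsClique (s : Set V) := by
    intro a ha b hb hab
    exact hcl a b ((hmem a).1 ha) ((hmem b).1 hb) hab
  have hcard : s.card ≤ r := by
    by_contra h
    push_neg at h
    obtain ⟨t, hts, htc⟩ := Finset.exists_subset_card_eq (by omega : r + 1 ≤ s.card)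
    exact hG t ⟨hclique.subset (by exact_mod_cast hts), htc⟩
  have e1 : w ⬝ᵥ (G.adjMatrix ℝ) *ᵥ w
      = ∑ i, ∑ j, w i * ((G.adjMatrix ℝ) i j * w j) := by
    simp [dotProduct, Matrix.mulVec, Finset.mul_sum]
  have e2 : ∀ i : V, ∑ j, w i * ((G.adjMatrix ℝ) i j * w j)
      = ∑ j ∈ s.erase i, w i * ((G.adjMatrix ℝ) i j * w j) := by
    intro i
    refine (Finset.sum_subset ((s.erase_subset i).trans (Finset.subset_univ _)) ?_).symm
    intro j _ hj
    rcases eq_or_ne j i with h | h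
    · subst h; simp
    · have : w j = 0 := by
        by_contra hwj
        exact hj (Finset.mem_erase.2 ⟨h, (hmem j).2 hwj⟩)
      simp [this]
  have e3 : w ⬝ᵥ (G.adjMatrix ℝ) *ᵥ w
      = ∑ i ∈ s, ∑ j ∈ s.erase i, w i * ((G.adjMatrix ℝ) i j * w j) := by
    rw [e1]
    simp_rw [e2]
    refine (Finset.sum_subset (Finset.subset_univ s) ?_).symm
    intro i _ hi
    have : w i = 0 := by by_contra h; exact hi ((hmem i).2 h)
    simp [this]
  set T : ℝ := ∑ v, w v with hTdef
  have hbound : w ⬝ᵥ (G.adjMatrix ℝ) *ᵥ w ≤ T ^ 2 - ∑ i ∈ s, (w i) ^ 2 := by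
    rw [e3]
    have step1 : ∑ i ∈ s, ∑ j ∈ s.erase i, w i * ((G.adjMatrix ℝ) i j * w j)
        ≤ ∑ i ∈ s, ∑ j ∈ s.erase i, w i * w j := by
      apply Finset.sum_le_sum; intro i _
      apply Finset.sum_le_sum; intro j _
      have hA : (G.adjMatrix ℝ) i j ≤ 1 := by
        rw [SimpleGraph.adjMatrix_apply]; split <;> norm_num
      have hA0 : (0:ℝ) ≤ (G.adjMatrix ℝ) i j := by
        rw [SimpleGraph.adjMatrix_apply]; split <;> norm_num
      have := mul_le_mul_of_nonneg_right hA (hw j)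
      nlinarith [hw i, hw j]
    refine step1.trans ?_
    have step2 : ∀ i ∈ s, ∑ j ∈ s.erase i, w i * w j = w i * (T - w i) := by
      intro i hi
      rw [← Finset.mul_sum, Finset.sum_erase_eq_sub hi, hT]
    rw [Finset.sum_congr rfl step2]
    have : ∑ i ∈ s, w i * (T - w i) = (∑ i ∈ s, w i) * T - ∑ i ∈ s, (w i)^2 := by
      rw [Finset.sum_mul]
      rw [← Finset.sum_sub_distrib]
      apply Finset.sum_congr rfl
      intro i _; ring
    rw [this, hT]
    exact le_of_eq (by ring)
  rcases Nat.eq_zero_or_pos s.card with hk | hk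
  · have hse : s = ∅ := Finset.card_eq_zero.1 hk
    have hT0 : T = 0 := by rw [← hT, hse]; simp
    have h0 : w ⬝ᵥ (G.adjMatrix ℝ) *ᵥ w ≤ 0 := by
      have := hbound
      rw [hse, hT0] at this
      simpa using this
    refine h0.trans ?_
    exact mul_nonneg (one_sub_inv_nonneg hr) (sq_nonneg _)
  · have hcheb : T ^ 2 ≤ (s.card : ℝ) * ∑ i ∈ s, (w i) ^ 2 := by
      rw [← hT]
      exact_mod_cast sq_sum_le_card_mul_sum_sq (s := s) (f := w)
    have hk' : (0:ℝ) < s.card := by exact_mod_cast hk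
    have hr' : (0:ℝ) < r := by exact_mod_cast hr
    have hkr : (s.card : ℝ) ≤ r := by exact_mod_cast hcard
    have h1 : ∑ i ∈ s, (w i)^2 ≥ T ^ 2 / s.card := by
      rw [ge_iff_le, div_le_iff₀ hk']; linarith [hcheb]
    have h2 : 1 / (r:ℝ) ≤ 1 / (s.card : ℝ) := by
      apply one_div_le_one_div_of_le hk' hkr
    have hT2 : (0:ℝ) ≤ T ^ 2 := sq_nonneg T
    calc w ⬝ᵥ (G.adjMatrix ℝ) *ᵥ w ≤ T ^ 2 - ∑ i ∈ s, (w i)^2 := hbound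
      _ ≤ T ^ 2 - T ^ 2 / s.card := by linarith
      _ = (1 - 1 / s.card) * T ^ 2 := by ring
      _ ≤ (1 - 1 / r) * T ^ 2 := by nlinarith
end MS

lemma ms_main {V : Type*} [Fintype V] [DecidableEq V] (G : SimpleGraph V)
    [DecidableRel G.Adj] {r : ℕ} (hr : 0 < r) (hG : G.CliqueFree (r + 1)) :
    ∀ (k : ℕ) (w : V → ℝ), (∀ v, 0 ≤ w v) →
      (Finset.univ.filter fun v => w v ≠ 0).card ≤ k →
      w ⬝ᵥ (G.adjMatrix ℝ) *ᵥ w ≤ (1 - 1 / r) * (∑ v, w v) ^ 2 := by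
  intro k
  induction k with
  | zero =>
    intro w hw hcard
    refine ms_clique G hr hG w hw ?_
    intro u v hu _ _
    exfalso
    have hmem : u ∈ Finset.univ.filter fun v => w v ≠ 0 := by simp [hu]
    have := Finset.card_pos.2 ⟨u, hmem⟩
    omega
  | succ k ih =>
    intro w hw hcard
    by_cases hcl : ∀ u v : V, w u ≠ 0 → w v ≠ 0 → u ≠ v → G.Adj u v
    · exact ms_clique G hr hG w hw hcl
    push_neg at hcl
    obtain ⟨u0, v0, hu0, hv0, huv0, hadj0⟩ := hcl
    have main : ∀ u v : V, w u ≠ 0 → w v ≠ 0 → u ≠ v → ¬G.Adj u v →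
        ((G.adjMatrix ℝ) *ᵥ w) u ≤ ((G.adjMatrix ℝ) *ᵥ w) v →
        w ⬝ᵥ (G.adjMatrix ℝ) *ᵥ w ≤ (1 - 1 / r) * (∑ x, w x) ^ 2 := by
      intro u v hu hv huv hadj hle
      set A := G.adjMatrix ℝ with hA
      set c := w u with hc
      have hc0 : 0 ≤ c := hw u
      set z : V → ℝ := c • (Pi.single v (1:ℝ) : V → ℝ) - c • (Pi.single u (1:ℝ) : V → ℝ) with hzdef
      set w' : V → ℝ := w + z with hw'def
      have hw'u : w' u = 0 := by
        simp [hw'def, hzdef, Pi.single_apply, huv.symm, hc]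
      have hw'v : w' v = w v + c := by
        simp [hw'def, hzdef, Pi.single_apply, huv]
      have hw'other : ∀ t, t ≠ u → t ≠ v → w' t = w t := by
        intro t htu htv
        simp [hw'def, hzdef, Pi.single_apply, htu, htv]
      have hw'nonneg : ∀ t, 0 ≤ w' t := by
        intro t
        rcases eq_or_ne t u with rfl | htu
        · rw [hw'u]
        rcases eq_or_ne t v with rfl | htv
        · rw [hw'v]; have := hw t; linarith
        · rw [hw'other t htu htv]; exact hw t
      have hsupp : (Finset.univ.filter fun t => w' t ≠ 0)
          ⊆ (Finset.univ.filter fun t => w t ≠ 0).erase u := by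
        intro t ht
        simp only [Finset.mem_filter, Finset.mem_univ, true_and] at ht
        have htu : t ≠ u := by rintro rfl; exact ht hw'u
        refine Finset.mem_erase.2 ⟨htu, ?_⟩
        simp only [Finset.mem_filter, Finset.mem_univ, true_and]
        rcases eq_or_ne t v with rfl | htv
        · exact hv
        · rw [hw'other t htu htv] at ht; exact ht
      have hcard' : (Finset.univ.filter fun t => w' t ≠ 0).card ≤ k := by
        have humem : u ∈ Finset.univ.filter fun t => w t ≠ 0 := by simp [show w u ≠ 0 from hu]
        have h1 := Finset.card_le_card hsupp
        have h2 := Finset.card_erase_of_mem humem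
        have h3 := Finset.card_pos.2 ⟨u, humem⟩
        omega
      have hsum : ∑ x, w' x = ∑ x, w x := by
        simp only [hw'def, hzdef, Pi.add_apply, Pi.sub_apply, Pi.smul_apply,
          smul_eq_mul, Pi.single_apply, mul_ite, mul_one, mul_zero]
        rw [Finset.sum_add_distrib, Finset.sum_sub_distrib]
        simp
      have hvm : ∀ x : V → ℝ, x ᵥ* A = A *ᵥ x := by
        intro x; funext t; simp [hA]
      have hsymm : ∀ x y : V → ℝ, x ⬝ᵥ A *ᵥ y = y ⬝ᵥ A *ᵥ x := by
        intro x y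
        rw [Matrix.dotProduct_mulVec, hvm, dotProduct_comm]
      have hz : ∀ x : V → ℝ, z ⬝ᵥ A *ᵥ x = c * ((A *ᵥ x) v - (A *ᵥ x) u) := by
        intro x
        rw [hzdef]
        rw [sub_dotProduct, smul_dotProduct, smul_dotProduct,
          single_dotProduct, single_dotProduct]
        simp [smul_eq_mul]
        ring
      have hAuu : A u u = 0 := by simp [hA]
      have hAvv : A v v = 0 := by simp [hA]
      have hAuv : A u v = 0 := by simp [hA, SimpleGraph.adjMatrix_apply, hadj]
      have hAvu : A v u = 0 := by
        have : ¬ G.Adj v u := fun h => hadj h.symm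
        simp [hA, SimpleGraph.adjMatrix_apply, this]
      have hAz : ∀ t, (A *ᵥ z) t = c * A t v - c * A t u := by
        intro t
        rw [hzdef, Matrix.mulVec_sub]
        simp [Matrix.mulVec_smul, Matrix.mulVec_single, smul_eq_mul]
        try ring
      have hzz : z ⬝ᵥ A *ᵥ z = 0 := by
        rw [hz z, hAz v, hAz u, hAvv, hAuu, hAuv, hAvu]
        ring
      have hexp : w' ⬝ᵥ A *ᵥ w' = w ⬝ᵥ A *ᵥ w + 2 * (c * ((A *ᵥ w) v - (A *ᵥ w) u)) := by
        rw [hw'def, Matrix.mulVec_add, dotProduct_add, add_dotProduct,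
          add_dotProduct, hsymm w z, hz w, hzz]
        ring
      have hQle : w ⬝ᵥ A *ᵥ w ≤ w' ⬝ᵥ A *ᵥ w' := by
        rw [hexp]
        nlinarith [mul_nonneg hc0 (sub_nonneg.2 hle)]
      calc w ⬝ᵥ A *ᵥ w ≤ w' ⬝ᵥ A *ᵥ w' := hQle
        _ ≤ (1 - 1 / r) * (∑ x, w' x) ^ 2 := ih w' hw'nonneg hcard'
        _ = (1 - 1 / r) * (∑ x, w x) ^ 2 := by rw [hsum]
    rcases le_total (((G.adjMatrix ℝ) *ᵥ w) u0) (((G.adjMatrix ℝ) *ᵥ w) v0) with h | h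
    · exact main u0 v0 hu0 hv0 huv0 hadj0 h
    · exact main v0 u0 hv0 hu0 huv0.symm (fun hh => hadj0 hh.symm) h


theorem wilf_bound {n r : ℕ} (hr : 0 < r) (G : SimpleGraph (Fin n))
    [DecidableRel G.Adj] (hG : G.CliqueFree (r + 1)) :
    graphMu G ≤ (1 - 1 / (r : ℝ)) * n := by
  have hrhs : (0:ℝ) ≤ (1 - 1 / (r:ℝ)) * n :=
    mul_nonneg (one_sub_inv_nonneg hr) (Nat.cast_nonneg n)
  refine Real.sSup_le ?_ hrhs
  rintro x hx
  simp only [Set.mem_setOf_eq] at hx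
  obtain ⟨y, hy⟩ := hx.exists_hasEigenvector
  have hvec : (G.adjMatrix ℝ) *ᵥ y = x • y := by
    have h := hy.apply_eq_smul
    rwa [Matrix.toLin'_apply] at h
  set S : ℝ := ∑ i, (y i) ^ 2 with hS
  have hSpos : 0 < S := by
    obtain ⟨i, hi⟩ := Function.ne_iff.1 hy.right
    refine Finset.sum_pos' (fun j _ => sq_nonneg _) ⟨i, Finset.mem_univ i, ?_⟩
    have : y i ≠ 0 := hi
    positivity
  have h1 : y ⬝ᵥ ((G.adjMatrix ℝ) *ᵥ y) = x * S := by
    rw [hvec, hS]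
    simp only [dotProduct, Pi.smul_apply, smul_eq_mul, Finset.mul_sum]
    exact Finset.sum_congr rfl fun i _ => by ring
  have habs : y ⬝ᵥ ((G.adjMatrix ℝ) *ᵥ y)
      ≤ (fun i => |y i|) ⬝ᵥ ((G.adjMatrix ℝ) *ᵥ fun i => |y i|) := by
    simp only [dotProduct, Matrix.mulVec]
    refine Finset.sum_le_sum fun i _ => ?_
    rw [Finset.mul_sum, Finset.mul_sum]
    refine Finset.sum_le_sum fun j _ => ?_
    have hA0 : (0:ℝ) ≤ (G.adjMatrix ℝ) i j := by
      rw [SimpleGraph.adjMatrix_apply]; split <;> norm_num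
    calc y i * ((G.adjMatrix ℝ) i j * y j)
        ≤ |y i * ((G.adjMatrix ℝ) i j * y j)| := le_abs_self _
      _ = |y i| * ((G.adjMatrix ℝ) i j * |y j|) := by
          rw [abs_mul, abs_mul, abs_of_nonneg hA0]; try ring
  have hms := ms_main G hr hG n (fun i => |y i|) (fun i => abs_nonneg _)
    ((Finset.card_filter_le _ _).trans (by simp))
  have hcs : (∑ i, |y i|) ^ 2 ≤ (n : ℝ) * S := by
    have h := sq_sum_le_card_mul_sum_sq (s := (Finset.univ : Finset (Fin n)))
      (f := fun i => |y i|)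
    simp only [sq_abs, Finset.card_univ, Fintype.card_fin] at h
    rw [hS]
    exact_mod_cast h
  have hfin : x * S ≤ ((1 - 1 / (r:ℝ)) * n) * S := by
    calc x * S = y ⬝ᵥ ((G.adjMatrix ℝ) *ᵥ y) := h1.symm
      _ ≤ (fun i => |y i|) ⬝ᵥ ((G.adjMatrix ℝ) *ᵥ fun i => |y i|) := habs
      _ ≤ (1 - 1 / (r:ℝ)) * (∑ i, |y i|) ^ 2 := hms
      _ ≤ (1 - 1 / (r:ℝ)) * ((n:ℝ) * S) :=
          mul_le_mul_of_nonneg_left hcs (one_sub_inv_nonneg hr)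
      _ = ((1 - 1 / (r:ℝ)) * n) * S := by ring
  exact le_of_mul_le_mul_right hfin hSpos
end

section
/- For any graph G of order n, the spectral radius satisfies μ(G)^2 ≥ (1/n) Σ_{u∈V(G)} d(u)^2, where d(u) is the degree of u. -/
open Module.End Finset RealInnerProductSpace

section Aux

variable {E : Type*} [NormedAddCommGroup E] [InnerProductSpace ℝ E] [FiniteDimensional ℝ E]

lemma aux_bddAbove (S : E →ₗ[ℝ] E) :
    BddAbove (Set.range fun x : {x : E // x ≠ 0} => ⟪S x, (x : E)⟫ / ‖(x : E)‖ ^ 2) := by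
  refine ⟨‖LinearMap.toContinuousLinearMap S‖, ?_⟩
  rintro y ⟨⟨x, hx⟩, rfl⟩
  have hx2 : (0 : ℝ) < ‖x‖ ^ 2 := pow_pos (norm_pos_iff.mpr hx) 2
  rw [div_le_iff₀ hx2]
  calc ⟪S x, x⟫ ≤ ‖S x‖ * ‖x‖ := real_inner_le_norm _ _
    _ ≤ (‖LinearMap.toContinuousLinearMap S‖ * ‖x‖) * ‖x‖ :=
        mul_le_mul_of_nonneg_right ((LinearMap.toContinuousLinearMap S).le_opNorm x)
          (norm_nonneg x)
    _ = ‖LinearMap.toContinuousLinearMap S‖ * ‖x‖ ^ 2 := by ring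

lemma aux_le_iSup (S : E →ₗ[ℝ] E) {x : E} (hx : x ≠ 0) :
    ⟪S x, x⟫ / ‖x‖ ^ 2 ≤ ⨆ y : {y : E // y ≠ 0}, ⟪S y, (y : E)⟫ / ‖(y : E)‖ ^ 2 :=
  le_ciSup (aux_bddAbove S) ⟨x, hx⟩

end Aux

theorem hofmeister {n : ℕ} (hn : 0 < n) (G : SimpleGraph (Fin n))
    [DecidableRel G.Adj] :
    graphMu G ^ 2 ≥ (1 / (n : ℝ)) * ∑ u : Fin n, ((G.degree u : ℝ)) ^ 2 := by
  classical
  set A := G.adjMatrix ℝ with hAdef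
  set T : EuclideanSpace ℝ (Fin n) →ₗ[ℝ] EuclideanSpace ℝ (Fin n) :=
    Matrix.toEuclideanLin A with hTdef
  have hherm : A.IsHermitian := by
    simp [hAdef, Matrix.IsHermitian]
  have hsym : T.IsSymmetric := Matrix.isHermitian_iff_isSymmetric.mp hherm
  haveI : Nontrivial (EuclideanSpace ℝ (Fin n)) := by
    refine ⟨EuclideanSpace.single ⟨0, hn⟩ 1, 0, fun h => ?_⟩
    have := congrFun congr(⇑$h) ⟨0, hn⟩
    simp at this
  -- inner product computation for T
  have hTapp : ∀ (x : EuclideanSpace ℝ (Fin n)) (i : Fin n),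
      T x i = ∑ j, A i j * x j := by
    intro x i
    rfl
  have hInner : ∀ x y : EuclideanSpace ℝ (Fin n),
      ⟪x, y⟫ = ∑ i, x i * y i := by
    intro x y
    simp [PiLp.inner_apply, mul_comm]
  -- the top Rayleigh quotient
  set μ₀ : ℝ := ⨆ x : {x : EuclideanSpace ℝ (Fin n) // x ≠ 0},
      ⟪T x, (x : EuclideanSpace ℝ (Fin n))⟫ / ‖(x : EuclideanSpace ℝ (Fin n))‖ ^ 2 with hμ₀def
  have hμ₀ev : HasEigenvalue T μ₀ := by
    have := hsym.hasEigenvalue_iSup_of_finiteDimensional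
    simpa [hμ₀def] using this
  -- key: every eigenvalue λ of T has |λ| ≤ μ₀
  have habs : ∀ lam : ℝ, HasEigenvalue T lam → |lam| ≤ μ₀ := by
    intro lam hlam
    obtain ⟨v, hv⟩ := hlam.exists_hasEigenvector
    have hv0 : v ≠ 0 := hv.2
    have hTv : T v = lam • v := mem_eigenspace_iff.mp hv.1
    set w : EuclideanSpace ℝ (Fin n) := (WithLp.equiv 2 (Fin n → ℝ)).symm (fun i => |v i|)
      with hwdef
    have hwapp : ∀ i, w i = |v i| := fun i => rfl
    have hw0 : w ≠ 0 := by
      intro h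
      apply hv0
      ext i
      have := congrFun congr(⇑$h) i
      simpa [hwapp] using this
    have hnw : ‖w‖ = ‖v‖ := by
      rw [EuclideanSpace.norm_eq, EuclideanSpace.norm_eq]
      congr 1
      refine Finset.sum_congr rfl fun i _ => ?_
      simp [hwapp]
    have hnv : (0:ℝ) < ‖v‖ ^ 2 := pow_pos (norm_pos_iff.mpr hv0) 2
    have key : |lam| * ‖v‖ ^ 2 ≤ ⟪T w, w⟫ := by
      have h1 : ⟪T v, v⟫ = lam * ‖v‖ ^ 2 := by
        rw [hTv, real_inner_smul_left, real_inner_self_eq_norm_sq]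
      have h2 : |⟪T v, v⟫| ≤ ⟪T w, w⟫ := by
        rw [hInner, hInner]
        calc |∑ i, T v i * v i| ≤ ∑ i, |T v i * v i| := Finset.abs_sum_le_sum_abs _ _
          _ ≤ ∑ i, T w i * w i := by
              refine Finset.sum_le_sum fun i _ => ?_
              rw [abs_mul, hTapp, hTapp, hwapp]
              have h3 : |∑ j, A i j * v j| ≤ ∑ j, A i j * |v j| := by
                refine (Finset.abs_sum_le_sum_abs _ _).trans ?_
                refine Finset.sum_le_sum fun j _ => ?_
                rw [abs_mul]
                have : |A i j| = A i j := by
                  simp [hAdef, SimpleGraph.adjMatrix_apply, apply_ite abs]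
                rw [this]
              calc |∑ j, A i j * v j| * |v i| ≤ (∑ j, A i j * |v j|) * |v i| := by
                    apply mul_le_mul_of_nonneg_right h3 (abs_nonneg _)
                _ = (∑ j, A i j * w j) * w i := by simp [hwapp]
      rw [h1] at h2
      calc |lam| * ‖v‖ ^ 2 = |lam * ‖v‖ ^ 2| := by
            rw [abs_mul, abs_of_nonneg (le_of_lt hnv)]
        _ ≤ ⟪T w, w⟫ := h2
    have : |lam| ≤ ⟪T w, w⟫ / ‖w‖ ^ 2 := by
      rw [hnw, le_div_iff₀ hnv]
      exact key
    exact this.trans (aux_le_iSup T hw0)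
  have hμ₀nonneg : 0 ≤ μ₀ := (abs_nonneg μ₀).trans (habs μ₀ hμ₀ev)
  -- the squared operator
  set T2 : EuclideanSpace ℝ (Fin n) →ₗ[ℝ] EuclideanSpace ℝ (Fin n) := T ∘ₗ T with hT2def
  have hsym2 : T2.IsSymmetric := by
    intro x y
    simp only [hT2def, LinearMap.comp_apply]
    rw [hsym (T x) y, hsym x (T y)]
  set ν : ℝ := ⨆ x : {x : EuclideanSpace ℝ (Fin n) // x ≠ 0},
      ⟪T2 x, (x : EuclideanSpace ℝ (Fin n))⟫ / ‖(x : EuclideanSpace ℝ (Fin n))‖ ^ 2 with hνdef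
  have hνev : HasEigenvalue T2 ν := by
    have := hsym2.hasEigenvalue_iSup_of_finiteDimensional
    simpa [hνdef] using this
  -- lower bound for ν from the all-ones vector
  set o : EuclideanSpace ℝ (Fin n) := (WithLp.equiv 2 (Fin n → ℝ)).symm (fun _ => (1:ℝ))
    with hodef
  have hoapp : ∀ i, o i = 1 := fun i => rfl
  have ho0 : o ≠ 0 := by
    intro h
    have := congrFun congr(⇑$h) ⟨0, hn⟩
    simp [hoapp] at this
  have hTo : ∀ i, T o i = (G.degree i : ℝ) := by
    intro i
    rw [hTapp]
    simp only [hAdef, hoapp, mul_one]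
    rw [← SimpleGraph.card_neighborFinset_eq_degree, SimpleGraph.neighborFinset_eq_filter]
    simp
  have hno : ‖o‖ ^ 2 = (n : ℝ) := by
    rw [← real_inner_self_eq_norm_sq, hInner]
    simp [hoapp]
  have hνlow : (1 / (n : ℝ)) * ∑ u : Fin n, ((G.degree u : ℝ)) ^ 2 ≤ ν := by
    have h1 : ⟪T2 o, o⟫ = ∑ u : Fin n, ((G.degree u : ℝ)) ^ 2 := by
      have : ⟪T2 o, o⟫ = ⟪T o, T o⟫ := by
        simp only [hT2def, LinearMap.comp_apply]
        exact hsym (T o) o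
      rw [this, hInner]
      refine Finset.sum_congr rfl fun i _ => ?_
      rw [hTo, sq]
    have h2 : ⟪T2 o, o⟫ / ‖o‖ ^ 2 ≤ ν := aux_le_iSup T2 ho0
    rw [h1, hno] at h2
    calc (1 / (n : ℝ)) * ∑ u : Fin n, ((G.degree u : ℝ)) ^ 2
        = (∑ u : Fin n, ((G.degree u : ℝ)) ^ 2) / (n : ℝ) := by ring
      _ ≤ ν := h2
  have hνnonneg : 0 ≤ ν := by
    refine le_trans ?_ hνlow
    positivity
  -- ν ≤ μ₀ ^ 2
  have hνle : ν ≤ μ₀ ^ 2 := by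
    obtain ⟨v, hv⟩ := hνev.exists_hasEigenvector
    have hv0 : v ≠ 0 := hv.2
    have hT2v : T (T v) = ν • v := mem_eigenspace_iff.mp hv.1
    set s : ℝ := Real.sqrt ν with hsdef
    have hs0 : 0 ≤ s := Real.sqrt_nonneg _
    have hs2 : s ^ 2 = ν := Real.sq_sqrt hνnonneg
    have hsμ : s ≤ μ₀ := by
      set w : EuclideanSpace ℝ (Fin n) := T v + s • v with hwdef
      have hTw : T w = s • w := by
        rw [hwdef]
        rw [map_add, map_smul, hT2v, smul_add, smul_smul, ← hs2]
        rw [sq]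
        abel
      by_cases hw : w = 0
      · have hTv : T v = (-s) • v := by
          have : T v + s • v = 0 := by rw [← hwdef, hw]
          have := eq_neg_of_add_eq_zero_left this
          rw [this, neg_smul]
        have : HasEigenvalue T (-s) :=
          hasEigenvalue_of_hasEigenvector ⟨mem_eigenspace_iff.mpr hTv, hv0⟩
        have := habs _ this
        rwa [abs_neg, abs_of_nonneg hs0] at this
      · have : HasEigenvalue T s :=
          hasEigenvalue_of_hasEigenvector ⟨mem_eigenspace_iff.mpr hTw, hw⟩
        have := habs _ this
        rwa [abs_of_nonneg hs0] at this
    calc ν = s ^ 2 := hs2.symm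
      _ ≤ μ₀ ^ 2 := by
          apply pow_le_pow_left₀ hs0 hsμ
  -- μ₀ ≤ graphMu G
  have hEv1 : ∀ x : ℝ, HasEigenvalue (Matrix.toLin' A) x → HasEigenvalue T x := by
    intro x h
    obtain ⟨v, hv⟩ := h.exists_hasEigenvector
    have hAv := mem_eigenspace_iff.mp hv.1
    refine hasEigenvalue_of_hasEigenvector
      (show HasEigenvector T x (WithLp.toLp 2 v) from ⟨mem_eigenspace_iff.mpr ?_, by simpa using hv.2⟩)
    show WithLp.toLp 2 (Matrix.toLin' A v) = WithLp.toLp 2 (x • v)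
    rw [hAv]
  have hEv2 : ∀ x : ℝ, HasEigenvalue T x → HasEigenvalue (Matrix.toLin' A) x := by
    intro x h
    obtain ⟨v, hv⟩ := h.exists_hasEigenvector
    have hAv := mem_eigenspace_iff.mp hv.1
    refine hasEigenvalue_of_hasEigenvector
      (show HasEigenvector (Matrix.toLin' A) x (WithLp.ofLp v) from ⟨mem_eigenspace_iff.mpr ?_, by simpa using hv.2⟩)
    show WithLp.ofLp (T v) = WithLp.ofLp (x • v)
    rw [hAv]
  have hμle : μ₀ ≤ graphMu G := by
    apply le_csSup
    · refine ⟨μ₀, ?_⟩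
      rintro x hx
      have : HasEigenvalue T x := hEv1 x hx
      exact (le_abs_self x).trans (habs x this)
    · exact hEv2 μ₀ hμ₀ev
  calc (1 / (n : ℝ)) * ∑ u : Fin n, ((G.degree u : ℝ)) ^ 2 ≤ ν := hνlow
    _ ≤ μ₀ ^ 2 := hνle
    _ ≤ graphMu G ^ 2 := by
        apply pow_le_pow_left₀ hμ₀nonneg hμle
end

section
/- If G is a subregular graph of order n ≥ 4, size m, and maximum degree Δ, then μ(G) - 2m/n > 1/(nΔ + 2n). -/
/-- A graph is subregular if its maximum and minimum degrees differ by 1 and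
all but one of its vertices have the same degree. -/
def Subregular {n : ℕ} (G : SimpleGraph (Fin n)) [DecidableRel G.Adj] : Prop :=
  G.maxDegree - G.minDegree = 1 ∧
    ∃ u : Fin n, ∀ v w : Fin n, v ≠ u → w ≠ u → G.degree v = G.degree w

open Finset Matrix

section helpers

lemma rayleigh_le_mu {n : ℕ} (hn : 0 < n) (G : SimpleGraph (Fin n)) [DecidableRel G.Adj]
    (x : Fin n → ℝ) (hx : x ≠ 0) :
    (∑ i, (G.adjMatrix ℝ *ᵥ x) i * x i) / (∑ i, x i * x i) ≤ graphMu G := by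
  haveI : Nonempty (Fin n) := Fin.pos_iff_nonempty.mp hn
  set A := G.adjMatrix ℝ with hAdef
  have hA : A.IsHermitian := by
    rw [Matrix.IsHermitian, Matrix.conjTranspose_eq_transpose_of_trivial]
    exact G.isSymm_adjMatrix
  set T : EuclideanSpace ℝ (Fin n) →ₗ[ℝ] EuclideanSpace ℝ (Fin n) := Matrix.toEuclideanLin A with hT
  have hTsymm : T.IsSymmetric := (Matrix.isHermitian_iff_isSymmetric).mp hA
  haveI : Nontrivial (EuclideanSpace ℝ (Fin n)) := by
    refine ⟨EuclideanSpace.single (Classical.arbitrary _) (1:ℝ), 0, ?_⟩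
    intro h
    have := congrArg (fun f => ‖f‖) h
    simp at this
  set μs : ℝ := ⨆ z : {z : EuclideanSpace ℝ (Fin n) // z ≠ 0},
      RCLike.re (inner (𝕜 := ℝ) (T z) (z : EuclideanSpace ℝ (Fin n))) / ‖(z : EuclideanSpace ℝ (Fin n))‖ ^ 2 with hμs
  have hev : Module.End.HasEigenvalue T μs := by
    rw [hμs]; simpa using hTsymm.hasEigenvalue_iSup_of_finiteDimensional
  have hspecT : spectrum ℝ T = spectrum ℝ A := Matrix.spectrum_toEuclideanLin
  have hspec' : spectrum ℝ (Matrix.toLin' A) = spectrum ℝ A := by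
    have h1 : Matrix.toLin' A = Matrix.toLinAlgEquiv' A := rfl
    rw [h1, AlgEquiv.spectrum_eq]
  have hSeq : {x : ℝ | Module.End.HasEigenvalue (Matrix.toLin' A) x} = spectrum ℝ A := by
    ext z
    rw [Set.mem_setOf_eq, Module.End.hasEigenvalue_iff_mem_spectrum, hspec']
  have hbdd : BddAbove {x : ℝ | Module.End.HasEigenvalue (Matrix.toLin' A) x} := by
    rw [hSeq]; exact (Matrix.finite_spectrum A).bddAbove
  have hmem : μs ∈ {x : ℝ | Module.End.HasEigenvalue (Matrix.toLin' A) x} := by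
    rw [hSeq, ← hspecT]
    exact Module.End.hasEigenvalue_iff_mem_spectrum.mp hev
  have hμle : μs ≤ graphMu G := le_csSup hbdd hmem
  set y : EuclideanSpace ℝ (Fin n) := (WithLp.equiv 2 (Fin n → ℝ)).symm x with hy
  have hy0 : y ≠ 0 := by simpa [hy] using hx
  have h1 : inner (𝕜 := ℝ) (T y) y = ∑ i, (A *ᵥ x) i * x i := by
    rw [hT, hy, WithLp.equiv_symm_apply, Matrix.toEuclideanLin_apply_piLp_toLp]
    simp [PiLp.inner_apply, mul_comm]
  have h2 : ‖y‖ ^ 2 = ∑ i, x i * x i := by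
    rw [← real_inner_self_eq_norm_sq]
    rw [hy, WithLp.equiv_symm_apply, PiLp.inner_apply]; simp [sq]
  have hbdd' : BddAbove (Set.range fun z : {z : EuclideanSpace ℝ (Fin n) // z ≠ 0} =>
      RCLike.re (inner (𝕜 := ℝ) (T z) (z : EuclideanSpace ℝ (Fin n))) / ‖(z : EuclideanSpace ℝ (Fin n))‖ ^ 2) := by
    set T' := LinearMap.toContinuousLinearMap T with hT'
    refine ⟨‖T'‖, ?_⟩
    rintro _ ⟨z, rfl⟩
    have hz2 : (0:ℝ) < ‖(z : EuclideanSpace ℝ (Fin n))‖ ^ 2 :=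
      pow_pos (norm_pos_iff.mpr z.2) 2
    have hTz : T (z : EuclideanSpace ℝ (Fin n)) = T' (z : EuclideanSpace ℝ (Fin n)) := rfl
    have hb : inner (𝕜 := ℝ) (T z) (z : EuclideanSpace ℝ (Fin n)) ≤ ‖T'‖ * ‖(z : EuclideanSpace ℝ (Fin n))‖ ^ 2 := by
      calc inner (𝕜 := ℝ) (T z) (z : EuclideanSpace ℝ (Fin n))
          ≤ ‖T (z : EuclideanSpace ℝ (Fin n))‖ * ‖(z : EuclideanSpace ℝ (Fin n))‖ := real_inner_le_norm _ _
        _ ≤ (‖T'‖ * ‖(z : EuclideanSpace ℝ (Fin n))‖) * ‖(z : EuclideanSpace ℝ (Fin n))‖ := by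
            rw [hTz]
            exact mul_le_mul_of_nonneg_right (T'.le_opNorm _) (norm_nonneg _)
        _ = ‖T'‖ * ‖(z : EuclideanSpace ℝ (Fin n))‖ ^ 2 := by ring
    show RCLike.re (inner (𝕜 := ℝ) (T z) (z : EuclideanSpace ℝ (Fin n))) / ‖(z : EuclideanSpace ℝ (Fin n))‖ ^ 2 ≤ ‖T'‖
    rw [div_le_iff₀ hz2]
    simpa using hb
  have hray : (∑ i, (A *ᵥ x) i * x i) / (∑ i, x i * x i) ≤ μs := by
    have := le_ciSup hbdd' (⟨y, hy0⟩ : {z : EuclideanSpace ℝ (Fin n) // z ≠ 0})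
    simpa [h1, h2, hμs] using this
  exact hray.trans hμle

lemma arithA (N C : ℝ) (hN : 4 ≤ N) (hC1 : 1 ≤ C) (hC2 : C ≤ N - 2) :
    1 / (N*(C+1) + 2*N) <
      ((N*C+1) + 2*(1/(C+1))*(C+1)) / (N + 2*(1/(C+1)) + (1/(C+1))^2) - (N*C+1)/N := by
  have hC0 : (0:ℝ) < C + 1 := by linarith
  have hN0 : (0:ℝ) < N := by linarith
  have hD : (0:ℝ) < N + 2*(1/(C+1)) + (1/(C+1))^2 := by positivity
  have hT : (0:ℝ) < N*(C+1) + 2*N := by nlinarith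
  rw [← sub_pos]
  have key : ((N*C+1) + 2*(1/(C+1))*(C+1)) / (N + 2*(1/(C+1)) + (1/(C+1))^2) - (N*C+1)/N
      - 1 / (N*(C+1) + 2*N) =
      (((N*C+1) + 2)*N*(C+1)^2*(N*(C+1)+2*N) - (N*C+1)*(N*(C+1)^2 + 2*(C+1) + 1)*(N*(C+1)+2*N)
        - N*(N*(C+1)^2 + 2*(C+1) + 1)) / (N*(N*(C+1)^2 + 2*(C+1) + 1)*(N*(C+1)+2*N)) := by
    field_simp
  rw [key]
  apply div_pos
  · nlinarith [mul_nonneg (sub_nonneg.mpr hC1) (sub_nonneg.mpr hC2), sq_nonneg (C-1), sq_nonneg (N-4), mul_nonneg (sub_nonneg.mpr hC1) (sub_nonneg.mpr hN)]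
  · have : (0:ℝ) < N*(C+1)^2 + 2*(C+1) + 1 := by positivity
    positivity

lemma arithB (N C : ℝ) (hN : 4 ≤ N) (hC1 : 1 ≤ C) (hC2 : C ≤ N - 2) :
    1 / (N*C + 2*N) <
      ((N*C-1) + 2*(-(1/C))*(C-1)) / (N + 2*(-(1/C)) + (-(1/C))^2) - (N*C-1)/N := by
  have hC0 : (0:ℝ) < C := by linarith
  have hN0 : (0:ℝ) < N := by linarith
  have hD : (0:ℝ) < N + 2*(-(1/C)) + (-(1/C))^2 := by
    have h1 : 1/C ≤ 1 := by rw [div_le_one hC0]; linarith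
    have h2 : (0:ℝ) ≤ (1/C)^2 := sq_nonneg _
    nlinarith
  have hT : (0:ℝ) < N*C + 2*N := by nlinarith
  rw [← sub_pos]
  have hD' : (0:ℝ) < N*C^2 - 2*C + 1 := by nlinarith
  have key : ((N*C-1) + 2*(-(1/C))*(C-1)) / (N + 2*(-(1/C)) + (-(1/C))^2) - (N*C-1)/N
      - 1 / (N*C + 2*N) =
      (((N*C-1)*C^2 - 2*C*(C-1))*N*(N*C+2*N) - (N*C-1)*(N*C^2 - 2*C + 1)*(N*C+2*N)
        - N*(N*C^2 - 2*C + 1)) / (N*(N*C^2 - 2*C + 1)*(N*C+2*N)) := by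
    rw [show N + 2*(-(1/C)) + (-(1/C))^2 = (N*C^2 - 2*C + 1)/C^2 by field_simp; ring]
    rw [div_div_eq_mul_div, div_sub_div _ _ (by positivity) (by positivity), div_sub_div _ _ (by positivity) (by positivity), div_eq_div_iff (by positivity) (by positivity)]
    field_simp
    ring
  rw [key]
  apply div_pos
  · nlinarith [mul_nonneg (sub_nonneg.mpr hC1) (sub_nonneg.mpr hC2), sq_nonneg (C-1), mul_nonneg (sub_nonneg.mpr hC1) (sub_nonneg.mpr hN), mul_pos hN0 hC0, mul_pos (mul_pos hN0 hC0) hC0]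
  · positivity

lemma sum_sq_aux {n : ℕ} (u : Fin n) (t : ℝ) :
    (∑ i, (fun i => if i = u then 1 + t else 1) i * (fun i => if i = u then 1 + t else 1) i)
      = (n : ℝ) + 2*t + t^2 := by
  have h : ∀ i : Fin n, (if i = u then (1:ℝ) + t else 1) * (if i = u then 1 + t else 1)
      = 1 + (if i = u then 2*t + t^2 else 0) := by
    intro i; by_cases h : i = u <;> simp [h] <;> ring
  simp only [h, Finset.sum_add_distrib, Finset.sum_const, Finset.sum_ite_eq', Finset.mem_univ,
    Finset.card_univ, Fintype.card_fin]
  push_cast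
  ring

lemma sum_ray_aux {n : ℕ} (G : SimpleGraph (Fin n)) [DecidableRel G.Adj] (u : Fin n) (t : ℝ) :
    (∑ i, (G.adjMatrix ℝ *ᵥ (fun i => if i = u then 1 + t else 1)) i
        * (fun i => if i = u then 1 + t else 1) i)
      = 2*(G.edgeFinset.card : ℝ) + 2*t*(G.degree u) := by
  set x : Fin n → ℝ := fun i => if i = u then 1 + t else 1 with hx
  have hmv : ∀ i, (G.adjMatrix ℝ *ᵥ x) i
      = (G.degree i : ℝ) + t * (if G.Adj i u then 1 else 0) := by
    intro i
    rw [SimpleGraph.adjMatrix_mulVec_apply]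
    have : ∀ j ∈ G.neighborFinset i, x j = 1 + (if j = u then t else 0) := by
      intro j _; by_cases h : j = u <;> simp [hx, h]
    rw [Finset.sum_congr rfl this, Finset.sum_add_distrib, Finset.sum_const,
      Finset.sum_ite_eq' (G.neighborFinset i) u (fun _ => t)]
    rw [show (G.neighborFinset i).card = G.degree i from rfl]
    simp only [nsmul_eq_mul, mul_one, SimpleGraph.mem_neighborFinset]
    by_cases h : G.Adj i u <;> simp [h]
  have hχ : (∑ i, (if G.Adj i u then (1:ℝ) else 0)) = (G.degree u : ℝ) := by
    rw [Finset.sum_boole]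
    congr 1
    rw [SimpleGraph.degree]
    congr 1
    ext i
    simp [SimpleGraph.mem_neighborFinset, SimpleGraph.adj_comm]
  have hsum : (∑ i, ((G.degree i : ℝ) + t * (if G.Adj i u then 1 else 0)) * x i)
      = 2*(G.edgeFinset.card : ℝ) + 2*t*(G.degree u) := by
    have hexp : ∀ i, ((G.degree i : ℝ) + t * (if G.Adj i u then 1 else 0)) * x i
        = ((G.degree i : ℝ) + t * (if G.Adj i u then 1 else 0))
          + (if i = u then t * ((G.degree i : ℝ) + t * (if G.Adj i u then 1 else 0)) else 0) := by
      intro i; by_cases h : i = u <;> simp [hx, h] <;> ring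
    rw [Finset.sum_congr rfl (fun i _ => hexp i), Finset.sum_add_distrib, Finset.sum_add_distrib,
      ← Finset.mul_sum, hχ, Finset.sum_ite_eq' Finset.univ u]
    have hdeg : (∑ i, (G.degree i : ℝ)) = 2*(G.edgeFinset.card : ℝ) := by
      rw [← Nat.cast_sum]
      rw [G.sum_degrees_eq_twice_card_edges]
      push_cast; ring
    simp [SimpleGraph.irrefl, hdeg]
    ring
  calc (∑ i, (G.adjMatrix ℝ *ᵥ x) i * x i)
      = ∑ i, ((G.degree i : ℝ) + t * (if G.Adj i u then 1 else 0)) * x i :=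
        Finset.sum_congr rfl (fun i _ => by rw [hmv i])
    _ = _ := hsum

end helpers

theorem subregular_bound {n : ℕ} (hn : 4 ≤ n) (G : SimpleGraph (Fin n))
    [DecidableRel G.Adj] (hsub : Subregular G) :
    graphMu G - 2 * (G.edgeFinset.card : ℝ) / n >
      1 / ((n : ℝ) * G.maxDegree + 2 * n) := by
  have hn0 : 0 < n := by omega
  haveI : Nonempty (Fin n) := Fin.pos_iff_nonempty.mp hn0
  obtain ⟨hdiff, u, hu⟩ := hsub
  haveI : Nontrivial (Fin n) := ⟨⟨⟨0, by omega⟩, ⟨1, by omega⟩, by simp [Fin.ext_iff]⟩⟩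
  obtain ⟨v₀, hv₀⟩ := exists_ne u
  set c := G.degree v₀ with hc
  have hall : ∀ v, v ≠ u → G.degree v = c := fun v hv => hu v v₀ hv hv₀
  obtain ⟨vM, hvM⟩ := G.exists_maximal_degree_vertex
  obtain ⟨vm, hvm⟩ := G.exists_minimal_degree_vertex
  have hMm : G.maxDegree = G.minDegree + 1 := by
    have h1 := G.minDegree_le_degree vM
    rw [← hvM] at h1
    omega
  -- degrees of vM, vm are c or degree u
  have hmaxval : G.maxDegree = c ∨ G.maxDegree = G.degree u := by
    by_cases h : vM = u
    · right; rw [hvM, h]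
    · left; rw [hvM, hall vM h]
  have hminval : G.minDegree = c ∨ G.minDegree = G.degree u := by
    by_cases h : vm = u
    · right; rw [hvm, h]
    · left; rw [hvm, hall vm h]
  have hcmax : c ≤ G.maxDegree := hc ▸ G.degree_le_maxDegree v₀
  have hcmin : G.minDegree ≤ c := hc ▸ G.minDegree_le_degree v₀
  have humax : G.degree u ≤ G.maxDegree := G.degree_le_maxDegree u
  have humin : G.minDegree ≤ G.degree u := G.minDegree_le_degree u
  have hcase : (G.degree u = c + 1 ∧ G.maxDegree = c + 1) ∨
      (G.degree u + 1 = c ∧ G.maxDegree = c) := by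
    rcases hmaxval with h1 | h1 <;> rcases hminval with h2 | h2 <;> omega
  -- the sum of degrees
  have hsum2 : 2 * G.edgeFinset.card = G.degree u + (n-1) * c := by
    rw [← G.sum_degrees_eq_twice_card_edges]
    rw [← Finset.add_sum_erase Finset.univ _ (Finset.mem_univ u)]
    congr 1
    rw [Finset.sum_congr rfl (fun v hv => hall v (Finset.ne_of_mem_erase hv))]
    rw [Finset.sum_const, Finset.card_erase_of_mem (Finset.mem_univ u), Finset.card_univ,
      Fintype.card_fin, smul_eq_mul]
  have hclt : c < n := by
    have := G.degree_lt_card_verts v₀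
    rwa [Fintype.card_fin, ← hc] at this
  have hm : 2 * (G.edgeFinset.card : ℝ) = (G.degree u : ℝ) + ((n:ℝ) - 1) * (c:ℝ) := by
    have h1 : ((n:ℝ) - 1) = ((n - 1 : ℕ) : ℝ) := by
      rw [Nat.cast_sub (by omega : 1 ≤ n)]
      norm_num
    rw [h1]
    exact_mod_cast hsum2
  rcases hcase with ⟨hdu, hΔ⟩ | ⟨hdu, hΔ⟩
  · -- Case A : degree u = c + 1 = maxDegree
    have hc1 : 1 ≤ c := by
      by_contra h
      have hc0 : c = 0 := by omega
      have hpos : 0 < G.degree u := by omega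
      obtain ⟨w, hw⟩ := G.degree_pos_iff_exists_adj u |>.mp hpos
      have hwne : w ≠ u := fun h => (G.ne_of_adj hw) h.symm
      have : 0 < G.degree w := G.degree_pos_iff_exists_adj w |>.mpr ⟨u, hw.symm⟩
      rw [hall w hwne, hc0] at this
      omega
    have hc2 : c + 2 ≤ n := by
      have := G.degree_lt_card_verts u
      rw [Fintype.card_fin, hdu] at this
      omega
    set t : ℝ := 1/((c:ℝ)+1) with ht
    set x : Fin n → ℝ := fun i => if i = u then 1 + t else 1 with hx
    have hxne : x ≠ 0 := by
      intro h
      have := congrFun h v₀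
      simp [hx, hv₀] at this
    have hray := rayleigh_le_mu hn0 G x hxne
    rw [sum_ray_aux G u t, sum_sq_aux u t] at hray
    have hmA : 2 * (G.edgeFinset.card : ℝ) = (n:ℝ)*(c:ℝ) + 1 := by
      rw [hm, hdu]; push_cast; ring
    have hc2r : (c:ℝ) ≤ (n:ℝ) - 2 := by
      have h : ((c + 2 : ℕ) : ℝ) ≤ ((n : ℕ) : ℝ) := by exact_mod_cast hc2
      push_cast at h
      linarith
    have harith := arithA (n:ℝ) (c:ℝ) (by exact_mod_cast hn) (by exact_mod_cast hc1) hc2r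
    have hΔr : (G.maxDegree : ℝ) = (c:ℝ) + 1 := by rw [hΔ]; push_cast; ring
    have hdur : (G.degree u : ℝ) = (c:ℝ) + 1 := by rw [hdu]; push_cast; ring
    rw [hmA, hdur] at hray
    rw [gt_iff_lt, hmA, hΔr]
    calc 1 / ((n:ℝ) * ((c:ℝ)+1) + 2*(n:ℝ))
        < ((n:ℝ)*(c:ℝ)+1 + 2*(1/((c:ℝ)+1))*((c:ℝ)+1)) / ((n:ℝ) + 2*(1/((c:ℝ)+1)) + (1/((c:ℝ)+1))^2)
          - ((n:ℝ)*(c:ℝ)+1)/(n:ℝ) := harith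
      _ ≤ graphMu G - ((n:ℝ)*(c:ℝ)+1)/(n:ℝ) := by
          apply sub_le_sub_right
          calc ((n:ℝ)*(c:ℝ)+1 + 2*(1/((c:ℝ)+1))*((c:ℝ)+1)) / ((n:ℝ) + 2*(1/((c:ℝ)+1)) + (1/((c:ℝ)+1))^2)
              = ((n:ℝ)*(c:ℝ) + 1 + 2*t*((c:ℝ)+1)) / ((n:ℝ) + 2*t + t^2) := by rw [ht]
            _ ≤ graphMu G := hray
  · -- Case B : degree u = c - 1, maxDegree = c
    have hc1 : 1 ≤ c := by omega
    have hc2 : c + 2 ≤ n := by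
      by_contra h
      have hceq : c = n - 1 := by omega
      have hadj : ∀ w : Fin n, w ≠ u → G.Adj w u := by
        intro w hw
        have hdw : G.degree w = n - 1 := by rw [hall w hw, hceq]
        have hsubn : G.neighborFinset w ⊆ Finset.univ.erase w := by
          intro a ha
          rw [Finset.mem_erase]
          exact ⟨(G.ne_of_adj ((G.mem_neighborFinset w a).mp ha).symm),
            Finset.mem_univ a⟩
        have hcard : (Finset.univ.erase w).card ≤ (G.neighborFinset w).card := by
          rw [Finset.card_erase_of_mem (Finset.mem_univ w), Finset.card_univ, Fintype.card_fin]
          rw [show (G.neighborFinset w).card = G.degree w from rfl, hdw]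
        have := Finset.eq_of_subset_of_card_le hsubn hcard
        have humem : u ∈ G.neighborFinset w := by
          rw [this, Finset.mem_erase]
          exact ⟨hw.symm, Finset.mem_univ u⟩
        exact (G.mem_neighborFinset w u).mp humem
      have hsubu : Finset.univ.erase u ⊆ G.neighborFinset u := by
        intro a ha
        rw [Finset.mem_erase] at ha
        exact (G.mem_neighborFinset u a).mpr (hadj a ha.1).symm
      have hdegu : n - 1 ≤ G.degree u := by
        calc n - 1 = (Finset.univ.erase u).card := by
              rw [Finset.card_erase_of_mem (Finset.mem_univ u), Finset.card_univ, Fintype.card_fin]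
          _ ≤ (G.neighborFinset u).card := Finset.card_le_card hsubu
          _ = G.degree u := rfl
      omega
    set t : ℝ := -(1/(c:ℝ)) with ht
    set x : Fin n → ℝ := fun i => if i = u then 1 + t else 1 with hx
    have hxne : x ≠ 0 := by
      intro h
      have := congrFun h v₀
      simp [hx, hv₀] at this
    have hray := rayleigh_le_mu hn0 G x hxne
    rw [sum_ray_aux G u t, sum_sq_aux u t] at hray
    have hmB : 2 * (G.edgeFinset.card : ℝ) = (n:ℝ)*(c:ℝ) - 1 := by
      have hdur : (G.degree u : ℝ) = (c:ℝ) - 1 := by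
        have h : ((G.degree u + 1 : ℕ) : ℝ) = ((c : ℕ) : ℝ) := by exact_mod_cast hdu
        push_cast at h
        linarith
      rw [hm, hdur]; ring
    have hdur : (G.degree u : ℝ) = (c:ℝ) - 1 := by
      have h : ((G.degree u + 1 : ℕ) : ℝ) = ((c : ℕ) : ℝ) := by exact_mod_cast hdu
      push_cast at h
      linarith
    have hc2r : (c:ℝ) ≤ (n:ℝ) - 2 := by
      have h : ((c + 2 : ℕ) : ℝ) ≤ ((n : ℕ) : ℝ) := by exact_mod_cast hc2
      push_cast at h
      linarith
    have harith := arithB (n:ℝ) (c:ℝ) (by exact_mod_cast hn) (by exact_mod_cast hc1) hc2r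
    rw [hmB, hdur] at hray
    rw [gt_iff_lt, hmB, show (G.maxDegree : ℝ) = (c:ℝ) from by exact_mod_cast congrArg Nat.cast hΔ]
    calc 1 / ((n:ℝ) * (c:ℝ) + 2*(n:ℝ))
        < ((n:ℝ)*(c:ℝ)-1 + 2*(-(1/(c:ℝ)))*((c:ℝ)-1)) / ((n:ℝ) + 2*(-(1/(c:ℝ))) + (-(1/(c:ℝ)))^2)
          - ((n:ℝ)*(c:ℝ)-1)/(n:ℝ) := harith
      _ ≤ graphMu G - ((n:ℝ)*(c:ℝ)-1)/(n:ℝ) := by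
          apply sub_le_sub_right
          calc ((n:ℝ)*(c:ℝ)-1 + 2*(-(1/(c:ℝ)))*((c:ℝ)-1)) / ((n:ℝ) + 2*(-(1/(c:ℝ))) + (-(1/(c:ℝ)))^2)
              = ((n:ℝ)*(c:ℝ) - 1 + 2*t*((c:ℝ)-1)) / ((n:ℝ) + 2*t + t^2) := by rw [ht]
            _ ≤ graphMu G := hray
end

section
/- Let G be the complete graph on n ≥ 4 vertices with one edge removed (so G has n-2 vertices of degree n-1 and 2 vertices of degree n-2), and let m be its number of edges. Then μ(G) - 2m/n > 1/(2m + 2n). -/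
open Finset Matrix

noncomputable def largerRoot (b c : ℝ) : ℝ := (b + √(b ^ 2 + 4 * c)) / 2

theorem largerRoot_sq {b c : ℝ} (h : 0 ≤ b ^ 2 + 4 * c) :
    largerRoot b c ^ 2 = b * largerRoot b c + c := by
  unfold largerRoot
  linear_combination Real.sq_sqrt h / 4

theorem lt_largerRoot_of_sq_lt {b c x : ℝ} (h : x ^ 2 < b * x + c) : x < largerRoot b c := by
  have : 2 * x - b < √(b ^ 2 + 4 * c) := Real.lt_sqrt_of_sq_lt (by linear_combination 4 * h)
  unfold largerRoot
  linarith

theorem sq_lt_sub_three_mul_add {n : ℝ} (hn : 4 ≤ n) :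
    ((n ^ 2 - n - 2) / n + 1 / (n ^ 2 + n - 2)) ^ 2 <
      (n - 3) * ((n ^ 2 - n - 2) / n + 1 / (n ^ 2 + n - 2)) + 2 * (n - 2) := by
  have hn0 : 0 < n := by linarith
  have hd : 0 < n ^ 2 + n - 2 := by nlinarith
  -- kept opaque so that `field_simp` does not renormalize it and lose `hd`
  set d := n ^ 2 + n - 2 with hd_def
  rw [div_add_div _ _ hn0.ne' hd.ne', div_pow, ← sub_pos]
  field_simp
  rw [hd_def]
  obtain ⟨t, ht, rfl⟩ : ∃ t, 0 ≤ t ∧ n = t + 4 := ⟨n - 4, by linarith, by ring⟩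
  ring_nf
  positivity

theorem Fintype.sum_ite_eq_or_eq {V M : Type*} [Fintype V] [DecidableEq V] [AddCommMonoid M]
    {a b : V} (hab : a ≠ b) (x y : M) :
    ∑ j : V, (if j = a ∨ j = b then x else y) = 2 • x + (Fintype.card V - 2) • y := by
  have hpair : ({j | j = a ∨ j = b} : Finset V) = {a, b} := by ext; simp
  rw [sum_ite, hpair, filter_not, hpair, sum_const, sum_const, card_pair hab, ← compl_eq_univ_sdiff,
    card_compl, card_pair hab]

theorem le_graphMu_of_hasEigenvalue {n : ℕ} (G : SimpleGraph (Fin n)) [DecidableRel G.Adj] {μ : ℝ}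
    (h : Module.End.HasEigenvalue (toLin' (G.adjMatrix ℝ)) μ) : μ ≤ graphMu G :=
  le_csSup (Module.End.finite_hasEigenvalue _).bddAbove h

namespace SimpleGraph
variable {V : Type*} [Fintype V] [DecidableEq V] {G : SimpleGraph V} [DecidableRel G.Adj] {a b : V}

theorem edgeFinset_eq_erase_of_adj_iff (hG : ∀ u v, G.Adj u v ↔ (u ≠ v ∧ s(u, v) ≠ s(a, b))) :
    G.edgeFinset = (⊤ : SimpleGraph V).edgeFinset.erase s(a, b) := by
  ext e
  induction e using Sym2.ind with
  | _ u v => simp [hG, and_comm]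

theorem card_edgeFinset_add_one_of_adj_iff (hab : a ≠ b)
    (hG : ∀ u v, G.Adj u v ↔ (u ≠ v ∧ s(u, v) ≠ s(a, b))) :
    #G.edgeFinset + 1 = (Fintype.card V).choose 2 := by
  rw [edgeFinset_eq_erase_of_adj_iff hG, card_erase_add_one (by simpa using hab),
    card_edgeFinset_top_eq_card_choose_two]

theorem adjMatrix_mulVec_apply_of_adj_iff {R : Type*} [NonAssocRing R] (hab : a ≠ b)
    (hG : ∀ u v, G.Adj u v ↔ (u ≠ v ∧ s(u, v) ≠ s(a, b))) (v : V → R) (i : V) :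
    (G.adjMatrix R *ᵥ v) i =
      ∑ j, v j - v i - (if i = a then v b else 0) - (if i = b then v a else 0) := by
  have hrow : ∀ j, G.adjMatrix R i j * v j = v j - (if i = j then v j else 0) -
      (if i = a ∧ j = b then v j else 0) - (if i = b ∧ j = a then v j else 0) := by
    intro j
    simp only [adjMatrix_apply, hG, ne_eq, Sym2.eq_iff]
    split_ifs <;> simp_all
  simp only [mulVec, dotProduct, hrow, sum_sub_distrib, sum_ite_eq, mem_univ, if_true, ite_and,
    sum_ite_irrel, sum_ite_eq', sum_const_zero]

theorem hasEigenvector_of_adj_iff (hab : a ≠ b)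
    (hG : ∀ u v, G.Adj u v ↔ (u ≠ v ∧ s(u, v) ≠ s(a, b))) (hV : 2 < Fintype.card V) {μ : ℝ}
    (hμ : μ ^ 2 = (Fintype.card V - 3) * μ + 2 * (Fintype.card V - 2)) :
    Module.End.HasEigenvector (toLin' (G.adjMatrix ℝ)) μ
      (fun j => if j = a ∨ j = b then (Fintype.card V : ℝ) - 2 else μ) := by
  have hV' : (2 : ℝ) < Fintype.card V := mod_cast hV
  set N : ℝ := (Fintype.card V : ℝ)
  have hsum : ∑ j : V, (if j = a ∨ j = b then N - 2 else μ) = 2 * (N - 2) + (N - 2) * μ := by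
    rw [Fintype.sum_ite_eq_or_eq hab, nsmul_eq_mul, nsmul_eq_mul, Nat.cast_sub hV.le]
    push_cast
    ring
  refine ⟨Module.End.mem_eigenspace_iff.2 ?_, fun h => ?_⟩
  · ext i
    rw [toLin'_apply, adjMatrix_mulVec_apply_of_adj_iff hab hG, hsum, Pi.smul_apply, smul_eq_mul]
    by_cases hia : i = a
    · simp only [hia, hab, hab.symm, or_true, or_false, ↓reduceIte, sub_zero]
      ring
    by_cases hib : i = b
    · simp only [hib, hab, hab.symm, or_true, or_false, ↓reduceIte, sub_zero]
      ring
    · simp only [hia, hib, or_self, ↓reduceIte, sub_zero]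
      linear_combination -hμ
  · have h2 : N - 2 = 0 := by simpa using congrFun h a
    linarith

end SimpleGraph

theorem complete_minus_edge_gap {n : ℕ} (hn : 4 ≤ n) (G : SimpleGraph (Fin n))
    [DecidableRel G.Adj] (a b : Fin n) (hab : a ≠ b)
    (hG : ∀ u v : Fin n, G.Adj u v ↔ (u ≠ v ∧ s(u, v) ≠ s(a, b))) :
    graphMu G - 2 * (G.edgeFinset.card : ℝ) / n >
      1 / (2 * (G.edgeFinset.card : ℝ) + 2 * n) := by
  have hN : (4 : ℝ) ≤ n := by exact_mod_cast hn
  have hm : 2 * (#G.edgeFinset : ℝ) = n ^ 2 - n - 2 := by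
    have h := congrArg (Nat.cast (R := ℝ)) (G.card_edgeFinset_add_one_of_adj_iff hab hG)
    rw [Fintype.card_fin] at h
    push_cast [Nat.cast_choose_two] at h
    linear_combination 2 * h
  have hroot := largerRoot_sq (b := (n : ℝ) - 3) (c := 2 * (n - 2)) (by nlinarith)
  have hvec := G.hasEigenvector_of_adj_iff hab hG (by rw [Fintype.card_fin]; omega)
    (by rw [Fintype.card_fin]; exact hroot)
  have hlt := lt_largerRoot_of_sq_lt (sq_lt_sub_three_mul_add hN)
  have hle := le_graphMu_of_hasEigenvalue G (Module.End.hasEigenvalue_of_hasEigenvector hvec)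
  rw [hm, show (n : ℝ) ^ 2 - n - 2 + 2 * n = n ^ 2 + n - 2 by ring]
  linarith
end

section
/- For even n ≥ 4, the spectral radius of the complement in K_n of a matching covering all but two vertices equals (n - 3 + sqrt(n² - 2n + 9))/2. -/
theorem complement_matching_mu {k : ℕ} (hk : 2 ≤ k) (G : SimpleGraph (Fin (2 * k)))
    [DecidableRel G.Adj] (f : Fin (2 * k) → Fin (2 * k)) (a b : Fin (2 * k))
    (hab : a ≠ b) (hfa : f a = a) (hfb : f b = b)
    (hinv : ∀ x, f (f x) = x) (hfree : ∀ x, x ≠ a → x ≠ b → f x ≠ x)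
    (hG : ∀ u v : Fin (2 * k), G.Adj u v ↔ (u ≠ v ∧ f u ≠ v)) :
    graphMu G =
      ((2 * k : ℝ) - 3 + Real.sqrt ((2 * k : ℝ) ^ 2 - 2 * (2 * k) + 9)) / 2 := by
  classical
  have hk4 : (4 : ℝ) ≤ 2 * (k : ℝ) := by
    have : (2 : ℝ) ≤ (k : ℝ) := by exact_mod_cast hk
    linarith
  set N : ℝ := 2 * (k : ℝ) with hNdef
  have hNcast : ((2 * k : ℕ) : ℝ) = N := by push_cast; ring
  set s : ℝ := Real.sqrt ((2 * k : ℝ) ^ 2 - 2 * (2 * k) + 9) with hsdef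
  have hs0 : 0 ≤ s := Real.sqrt_nonneg _
  have hs2 : s ^ 2 = N ^ 2 - 2 * N + 9 := by
    rw [hsdef]
    rw [Real.sq_sqrt (by nlinarith : (0:ℝ) ≤ (2 * k : ℝ) ^ 2 - 2 * (2 * k) + 9)]
  have hsge : N - 1 ≤ s := by nlinarith [sq_nonneg (s - (N - 1)), sq_nonneg (s + (N - 1))]
  set μ : ℝ := ((2 * k : ℝ) - 3 + s) / 2 with hmudef
  have hmu2 : μ ^ 2 = (N - 3) * μ + N := by
    have h2mu : 2 * μ = (N - 3) + s := by rw [hmudef]; ring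
    nlinarith [hs2, h2mu]
  have hmuge : N - 2 ≤ μ := by rw [hmudef]; linarith
  have hmupos : 0 < μ := by linarith
  -- row sum lemma
  have hrow : ∀ (w : Fin (2 * k) → ℝ) (u : Fin (2 * k)),
      ∑ x ∈ G.neighborFinset u, w x
        = (∑ x, w x) - w u - (if f u = u then 0 else w (f u)) := by
    intro w u
    have hset : G.neighborFinset u = Finset.univ \ {u, f u} := by
      ext x
      simp only [SimpleGraph.mem_neighborFinset, hG, Finset.mem_sdiff, Finset.mem_univ,
        Finset.mem_insert, Finset.mem_singleton, true_and]
      constructor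
      · rintro ⟨h1, h2⟩ (rfl | rfl)
        · exact h1 rfl
        · exact h2 rfl
      · intro h
        exact ⟨fun h' => h (Or.inl h'.symm), fun h' => h (Or.inr h'.symm)⟩
    rw [hset, Finset.sum_sdiff_eq_sub (Finset.subset_univ _)]
    by_cases hfu : f u = u
    · simp [hfu]
    · rw [Finset.sum_pair (fun h => hfu h.symm)]
      simp [hfu]
      ring
  -- the f-image of a non-fixed point is not a or b
  have hfna : ∀ u : Fin (2 * k), u ≠ a → f u ≠ a := by
    intro u hu h
    exact hu (by rw [← hinv u, h, hfa])
  have hfnb : ∀ u : Fin (2 * k), u ≠ b → f u ≠ b := by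
    intro u hu h
    exact hu (by rw [← hinv u, h, hfb])
  -- sum of a two-valued function
  have hsum2 : ∀ (D T : ℝ),
      (∑ u : Fin (2 * k), (if u = a ∨ u = b then D else T)) = 2 * D + (N - 2) * T := by
    intro D T
    have hpt : ∀ u : Fin (2 * k), (if u = a ∨ u = b then D else T)
        = (if u = a then D - T else 0) + (if u = b then D - T else 0) + T := by
      intro u
      by_cases hua : u = a
      · subst hua
        simp [hab]
      · by_cases hub : u = b
        · subst hub
          simp [Ne.symm hab]
        · simp [hua, hub]
    rw [Finset.sum_congr rfl (fun u _ => hpt u)]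
    rw [Finset.sum_add_distrib, Finset.sum_add_distrib, Finset.sum_ite_eq' Finset.univ a,
      Finset.sum_ite_eq' Finset.univ b, Finset.sum_const]
    simp only [Finset.mem_univ, if_true, Finset.card_univ, Fintype.card_fin, nsmul_eq_mul]
    rw [hNcast]
    ring
  -- Upper bound
  have hub : ∀ lam : ℝ, Module.End.HasEigenvalue (Matrix.toLin' (G.adjMatrix ℝ)) lam →
      lam ≤ μ := by
    intro lam hl
    by_contra hlt
    push_neg at hlt
    obtain ⟨v, hv⟩ := hl.exists_hasEigenvector
    have hlam0 : 0 < lam := lt_trans hmupos hlt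
    have hveq : ∀ u, ((G.adjMatrix ℝ).mulVec v) u = lam * v u := by
      intro u
      have h := hv.apply_eq_smul
      rw [Matrix.toLin'_apply] at h
      have := congrFun h u
      simpa using this
    have heq : ∀ u, (∑ x, v x) - v u - (if f u = u then 0 else v (f u)) = lam * v u := by
      intro u
      rw [← hrow v u, ← SimpleGraph.adjMatrix_mulVec_apply]
      exact hveq u
    set S : ℝ := ∑ x, v x with hSdef
    have hva : (lam + 1) * v a = S := by
      have h := heq a
      rw [if_pos hfa] at h
      linarith
    have hvb : (lam + 1) * v b = S := by
      have h := heq b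
      rw [if_pos hfb] at h
      linarith
    have hmatch : ∀ u, u ≠ a → u ≠ b → (lam + 2) * v u = S := by
      intro u hua hub'
      have hfu : f u ≠ u := hfree u hua hub'
      have h1 := heq u
      rw [if_neg hfu] at h1
      have h2 := heq (f u)
      have hffu : ¬ f (f u) = f u := by
        rw [hinv u]
        exact fun h => hfu h.symm
      rw [if_neg hffu, hinv u] at h2
      have hvv : v u = v (f u) := by
        have : lam * (v u - v (f u)) = 0 := by linarith
        rcases mul_eq_zero.mp this with h | h
        · exact absurd h (ne_of_gt hlam0)
        · linarith
      rw [← hvv] at h1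
      linarith
    have hl1 : lam + 1 ≠ 0 := by positivity
    have hl2 : lam + 2 ≠ 0 := by positivity
    have hSne : S ≠ 0 := by
      intro h0
      apply hv.right
      funext u
      show v u = 0
      by_cases hua : u = a
      · subst hua
        have := hva; rw [h0] at this
        exact (mul_eq_zero.mp this).resolve_left hl1
      · by_cases hub' : u = b
        · subst hub'
          have := hvb; rw [h0] at this
          exact (mul_eq_zero.mp this).resolve_left hl1
        · have := hmatch u hua hub'; rw [h0] at this
          exact (mul_eq_zero.mp this).resolve_left hl2
    have hsum : S = 2 * (S / (lam + 1)) + (N - 2) * (S / (lam + 2)) := by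
      have hpt : ∀ u ∈ Finset.univ, v u
          = (if u = a ∨ u = b then S / (lam + 1) else S / (lam + 2)) := by
        intro u _
        by_cases hua : u = a
        · subst hua; rw [if_pos (Or.inl rfl)]
          field_simp
          linarith [hva]
        · by_cases hub' : u = b
          · subst hub'; rw [if_pos (Or.inr rfl)]
            field_simp
            linarith [hvb]
          · rw [if_neg (by tauto)]
            field_simp
            linarith [hmatch u hua hub']
      conv_lhs => rw [hSdef]
      rw [Finset.sum_congr rfl hpt, hsum2]
    have key : S * ((lam + 1) * (lam + 2)) = S * (2 * (lam + 2) + (N - 2) * (lam + 1)) := by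
      calc S * ((lam + 1) * (lam + 2))
          = (2 * (S / (lam + 1)) + (N - 2) * (S / (lam + 2))) * ((lam + 1) * (lam + 2)) := by
            rw [← hsum]
        _ = S * (2 * (lam + 2) + (N - 2) * (lam + 1)) := by field_simp
    have key2 : (lam + 1) * (lam + 2) = 2 * (lam + 2) + (N - 2) * (lam + 1) :=
      mul_left_cancel₀ hSne key
    have hq : lam ^ 2 = (N - 3) * lam + N := by linear_combination key2
    have hfac : 0 < (lam - μ) * (lam + μ - (N - 3)) :=
      mul_pos (by linarith) (by linarith)
    have hzero : (lam - μ) * (lam + μ - (N - 3)) = 0 := by linear_combination hq - hmu2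
    exact absurd hzero (ne_of_gt hfac)
  -- Membership : μ is an eigenvalue
  have hmem : Module.End.HasEigenvalue (Matrix.toLin' (G.adjMatrix ℝ)) μ := by
    set d : ℝ := μ - N + 4 with hddef
    set v : Fin (2 * k) → ℝ := fun u => if u = a ∨ u = b then d else 2 with hvdef
    have hd2 : (2 : ℝ) ≤ d := by rw [hddef]; linarith
    have hsv : (∑ x, v x) = 2 * d + (N - 2) * 2 := by
      rw [hvdef]; exact hsum2 d 2
    refine Module.End.hasEigenvalue_of_hasEigenvector (x := v) ⟨?_, ?_⟩
    · rw [Module.End.mem_eigenspace_iff, Matrix.toLin'_apply]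
      funext u
      rw [show ((G.adjMatrix ℝ).mulVec v) u = ∑ x ∈ G.neighborFinset u, v x from
        SimpleGraph.adjMatrix_mulVec_apply G u v]
      show _ = μ * v u
      rw [hrow v u, hsv]
      by_cases hua : u = a
      · have hfuu : f u = u := by rw [hua, hfa]
        rw [if_pos hfuu]
        have hvu : v u = d := by rw [hvdef]; simp [hua]
        rw [hvu]
        have : μ * d = μ + N := by rw [hddef]; linear_combination hmu2
        rw [this]; ring
      · by_cases hub' : u = b
        · have hfuu : f u = u := by rw [hub', hfb]
          rw [if_pos hfuu]
          have hvu : v u = d := by rw [hvdef]; simp [hub']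
          rw [hvu]
          have : μ * d = μ + N := by rw [hddef]; linear_combination hmu2
          rw [this]; ring
        · have hfu : f u ≠ u := hfree u hua hub'
          rw [if_neg hfu]
          have hvu : v u = 2 := by rw [hvdef]; simp [hua, hub']
          have hvfu : v (f u) = 2 := by
            rw [hvdef]; simp [hfna u hua, hfnb u hub']
          rw [hvu, hvfu, hddef]
          ring
    · intro h0
      have := congrFun h0 a
      rw [hvdef] at this
      simp at this
      rw [this] at hd2
      linarith
  unfold graphMu
  exact IsGreatest.csSup_eq ⟨hmem, hub⟩
end

section
/- Let 0 ≤ k ≤ l and let G be a graph with no B_{k+1} and no K_{2,l+1}, of order n. Then for every vertex u, Σ_{v adjacent to u} (d(v) - k - 1) ≤ (n - d(u) - 1)·l. -/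
/-!
Split the neighbourhood of a neighbour `v` of `u` into `u` itself, the common neighbours of `u`
and `v` (at most `k` of them, as `u ~ v`), and the non-neighbours of `u`. Summing over `v`, the
last part counts edges between `N(u)` and the `n - d(u) - 1` non-neighbours `w` of `u`, and each
such `w` has at most `l` neighbours in `N(u)`, as `w ≁ u`.
-/

open Finset

namespace SimpleGraph

variable {V : Type*} [DecidableEq V] (G : SimpleGraph V) [DecidableRel G.Adj]

theorem sum_card_neighborFinset_inter_comm [G.LocallyFinite] (s t : Finset V) :
    ∑ v ∈ s, #(G.neighborFinset v ∩ t) = ∑ w ∈ t, #(G.neighborFinset w ∩ s) := by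
  have above (v : V) : G.neighborFinset v ∩ t = t.bipartiteAbove G.Adj v := by
    ext x; rw [mem_bipartiteAbove, mem_inter, mem_neighborFinset, and_comm]
  have below (w : V) : G.neighborFinset w ∩ s = s.bipartiteBelow G.Adj w := by
    ext x; rw [mem_bipartiteBelow, mem_inter, mem_neighborFinset, G.adj_comm, and_comm]
  simp_rw [above, below]
  exact sum_card_bipartiteAbove_eq_sum_card_bipartiteBelow _

variable [Fintype V]

theorem degree_le_card_inter_neighborFinset_add (u v : V) :
    G.degree v ≤ #(G.neighborFinset u ∩ G.neighborFinset v) + 1 +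
      #(G.neighborFinset v ∩ Gᶜ.neighborFinset u) := by
  have hsplit := card_inter_add_card_sdiff (G.neighborFinset v) (G.neighborFinset u)
  have hsdiff : G.neighborFinset v \ G.neighborFinset u ⊆
      insert u (G.neighborFinset v ∩ Gᶜ.neighborFinset u) := by
    intro w
    simp only [mem_sdiff, mem_insert, mem_inter, mem_neighborFinset, compl_adj]
    tauto
  have hnonneighbors := (card_le_card hsdiff).trans (card_insert_le _ _)
  rw [inter_comm, ← card_neighborFinset_eq_degree]
  omega

theorem sum_degree_neighborFinset_le {k l : ℕ} (u : V)
    (hbook : ∀ v, G.Adj u v → #(G.neighborFinset u ∩ G.neighborFinset v) ≤ k)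
    (hK2l : ∀ w, u ≠ w → ¬ G.Adj u w → #(G.neighborFinset u ∩ G.neighborFinset w) ≤ l) :
    ∑ v ∈ G.neighborFinset u, G.degree v ≤ G.degree u * (k + 1) + Gᶜ.degree u * l := by
  have hneighbor : ∀ v ∈ G.neighborFinset u,
      G.degree v ≤ (k + 1) + #(G.neighborFinset v ∩ Gᶜ.neighborFinset u) := fun v hv => by
    have hsplit := G.degree_le_card_inter_neighborFinset_add u v
    have hcommon := hbook v ((G.mem_neighborFinset u v).1 hv)
    omega
  have hnonneighbor : ∀ w ∈ Gᶜ.neighborFinset u, #(G.neighborFinset w ∩ G.neighborFinset u) ≤ l :=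
    fun w hw => by
      obtain ⟨hne, hnadj⟩ := (compl_adj G u w).1 ((mem_neighborFinset _ _ _).1 hw)
      exact inter_comm (G.neighborFinset w) _ ▸ hK2l w hne hnadj
  calc ∑ v ∈ G.neighborFinset u, G.degree v
      ≤ ∑ v ∈ G.neighborFinset u, ((k + 1) + #(G.neighborFinset v ∩ Gᶜ.neighborFinset u)) :=
        sum_le_sum hneighbor
    _ = G.degree u * (k + 1) +
          ∑ w ∈ Gᶜ.neighborFinset u, #(G.neighborFinset w ∩ G.neighborFinset u) := by
        rw [sum_add_distrib, sum_const, card_neighborFinset_eq_degree, smul_eq_mul,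
          sum_card_neighborFinset_inter_comm]
    _ ≤ G.degree u * (k + 1) + Gᶜ.degree u * l := by
        grw [sum_le_sum hnonneighbor, sum_const, card_neighborFinset_eq_degree, smul_eq_mul]

end SimpleGraph

-- `G` contains no book `B_{k+1}`: adjacent vertices have at most `k` common neighbors.
-- `G` contains no `K_{2,l+1}`: nonadjacent vertices have at most `l` common neighbors.
theorem neighbor_degree_sum_bound_general {n k l : ℕ} (G : SimpleGraph (Fin n))
    [DecidableRel G.Adj]
    (hbook : ∀ u v : Fin n, G.Adj u v →
      (G.neighborFinset u ∩ G.neighborFinset v).card ≤ k)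
    (hK2l : ∀ u v : Fin n, u ≠ v → ¬ G.Adj u v →
      (G.neighborFinset u ∩ G.neighborFinset v).card ≤ l)
    (u : Fin n) :
    ∑ v ∈ G.neighborFinset u, ((G.degree v : ℝ) - k - 1) ≤
      ((n : ℝ) - G.degree u - 1) * l := by
  have hsum : ((∑ v ∈ G.neighborFinset u, G.degree v : ℕ) : ℝ) ≤
      G.degree u * (k + 1) + Gᶜ.degree u * l := by
    exact_mod_cast G.sum_degree_neighborFinset_le u (hbook u) (hK2l u)
  have hcompl : (Gᶜ.degree u : ℝ) = n - G.degree u - 1 := by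
    have hlt := G.degree_lt_card_verts u
    rw [Fintype.card_fin] at hlt
    rw [SimpleGraph.degree_compl, Fintype.card_fin, Nat.sub_sub, Nat.cast_sub (by omega)]
    push_cast
    ring
  rw [sum_sub_distrib, sum_sub_distrib, sum_const, sum_const, G.card_neighborFinset_eq_degree,
    ← hcompl, ← Nat.cast_sum]
  simp only [nsmul_eq_mul, mul_one]
  linarith

theorem neighbor_degree_sum_bound {n k l : ℕ} (hkl : k ≤ l) (G : SimpleGraph (Fin n))
    [DecidableRel G.Adj]
    (hbook : ∀ u v : Fin n, G.Adj u v →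
      (G.neighborFinset u ∩ G.neighborFinset v).card ≤ k)
    (hK2l : ∀ u v : Fin n, u ≠ v → ¬ G.Adj u v →
      (G.neighborFinset u ∩ G.neighborFinset v).card ≤ l)
    (u : Fin n) :
    ∑ v ∈ G.neighborFinset u, ((G.degree v : ℝ) - k - 1) ≤
      ((n : ℝ) - G.degree u - 1) * l :=
  neighbor_degree_sum_bound_general G hbook hK2l u
end

section
/- Let G be a graph of order n in which every two adjacent vertices have at most k common neighbors and every two nonadjacent vertices have at most l common neighbors, with 0 ≤ k ≤ l. Then every row sum of the matrix C = A² - (k+1-l)A - (n-1)l·I is nonpositive, where A is the adjacency matrix of G. -/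
/-!
Entry `(u, v)` of `A²` counts the common neighbours of `u` and `v`, so the row sum of `A²` at `u`
is `d(u)` (from `v = u`) plus at most `k` for each of the `d(u)` neighbours and at most `l` for
each of the `n - 1 - d(u)` non-neighbours `v ≠ u`. This bound is exactly the row sum of
`(k + 1 - l) A + (n - 1) l I` at `u`.
-/

open Finset Matrix

namespace SimpleGraph

variable {V : Type*} [Fintype V] (G : SimpleGraph V) [DecidableRel G.Adj]

theorem sum_adjMatrix_apply {R : Type*} [NonAssocSemiring R] (u : V) :
    ∑ v, G.adjMatrix R u v = G.degree u := by
  simp [adjMatrix_apply, sum_boole, ← card_neighborFinset_eq_degree, neighborFinset_eq_filter]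

variable [DecidableEq V]

theorem adjMatrix_sq_apply {R : Type*} [Semiring R] (u v : V) :
    (G.adjMatrix R ^ 2) u v = #(G.neighborFinset u ∩ G.neighborFinset v) := by
  rw [sq, adjMatrix_mul_apply, ← filter_mem_eq_inter]
  simp [adjMatrix_apply, sum_boole, adj_comm]

theorem sum_eq_add_sum_neighborFinset_add_sum_compl {M : Type*} [AddCommMonoid M]
    (f : V → M) (u : V) :
    ∑ v, f v = f u + ∑ v ∈ G.neighborFinset u, f v + ∑ v ∈ Gᶜ.neighborFinset u, f v := by
  rw [neighborFinset_compl, add_assoc, ← sum_union (disjoint_compl_right.mono_right sdiff_subset),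
    ← sum_insert (by simp)]
  congr 1
  ext v
  by_cases v = u <;> simp [*, em]

theorem degree_add_degree_compl (u : V) :
    G.degree u + Gᶜ.degree u + 1 = Fintype.card V := by
  have := G.sum_eq_add_sum_neighborFinset_add_sum_compl (fun _ ↦ 1) u
  simp only [sum_const, card_univ, card_neighborFinset_eq_degree, smul_eq_mul, mul_one] at this
  omega

theorem sum_card_inter_neighborFinset_le {k l : ℕ} (u : V)
    (hadj : ∀ v, G.Adj u v → #(G.neighborFinset u ∩ G.neighborFinset v) ≤ k)
    (hcompl : ∀ v, Gᶜ.Adj u v → #(G.neighborFinset u ∩ G.neighborFinset v) ≤ l) :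
    ∑ v, #(G.neighborFinset u ∩ G.neighborFinset v) ≤
      G.degree u + G.degree u * k + Gᶜ.degree u * l := by
  rw [G.sum_eq_add_sum_neighborFinset_add_sum_compl, inter_self, card_neighborFinset_eq_degree]
  gcongr
  · simpa [card_neighborFinset_eq_degree] using
      sum_le_card_nsmul _ _ k fun v hv ↦ hadj v ((G.mem_neighborFinset u v).mp hv)
  · simpa [card_neighborFinset_eq_degree] using
      sum_le_card_nsmul _ _ l fun v hv ↦ hcompl v ((Gᶜ.mem_neighborFinset u v).mp hv)

end SimpleGraph

theorem row_sums_nonpositive_general {n k l : ℕ} (G : SimpleGraph (Fin n))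
    [DecidableRel G.Adj]
    (hadj : ∀ u v : Fin n, G.Adj u v →
      (G.neighborFinset u ∩ G.neighborFinset v).card ≤ k)
    (hnonadj : ∀ u v : Fin n, u ≠ v → ¬ G.Adj u v →
      (G.neighborFinset u ∩ G.neighborFinset v).card ≤ l) :
    ∀ u : Fin n,
      ∑ v : Fin n,
        ((G.adjMatrix ℝ) ^ 2 - ((k : ℝ) + 1 - l) • (G.adjMatrix ℝ) -
          (((n : ℝ) - 1) * l) • (1 : Matrix (Fin n) (Fin n) ℝ)) u v ≤ 0 := by
  intro u
  have hsq : ∑ v, (G.adjMatrix ℝ ^ 2) u v ≤ G.degree u + G.degree u * k + Gᶜ.degree u * l := by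
    simp only [G.adjMatrix_sq_apply]
    exact_mod_cast G.sum_card_inter_neighborFinset_le u (hadj u)
      fun v hv ↦ hnonadj u v hv.ne (G.compl_adj u v |>.mp hv).2
  have hcard : (G.degree u + Gᶜ.degree u + 1 : ℝ) = n := by
    exact_mod_cast (G.degree_add_degree_compl u).trans (Fintype.card_fin n)
  simp only [Matrix.sub_apply, Matrix.smul_apply, smul_eq_mul, sum_sub_distrib, ← mul_sum,
    G.sum_adjMatrix_apply, one_apply, sum_ite_eq, mem_univ, if_true, ← hcard]
  linarith

theorem row_sums_nonpositive {n k l : ℕ} (hkl : k ≤ l) (G : SimpleGraph (Fin n))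
    [DecidableRel G.Adj]
    (hadj : ∀ u v : Fin n, G.Adj u v →
      (G.neighborFinset u ∩ G.neighborFinset v).card ≤ k)
    (hnonadj : ∀ u v : Fin n, u ≠ v → ¬ G.Adj u v →
      (G.neighborFinset u ∩ G.neighborFinset v).card ≤ l) :
    ∀ u : Fin n,
      ∑ v : Fin n,
        ((G.adjMatrix ℝ) ^ 2 - ((k : ℝ) + 1 - l) • (G.adjMatrix ℝ) -
          (((n : ℝ) - 1) * l) • (1 : Matrix (Fin n) (Fin n) ℝ)) u v ≤ 0 :=
  row_sums_nonpositive_general G hadj hnonadj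
end
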